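/- arXiv:1905.12234 — 4 statements merged into one kernel-verified Lean document; each statement's English description precedes it below -/
import Mathlib

section
/- Let Q be an indefinite nondegenerate quadratic form in 3 variables and ξ ∈ R^3. If SO(Q_ξ)° = SO(Q'_{ξ'})° for another nondegenerate quadratic form Q' and ξ' ∈ R^3, then ξ = ξ' and the symmetric matrices σ, σ' of Q and Q' satisfy σ = cσ' for some nonzero real c. -/
open Matrix

abbrev Aff : Type := Matrix (Fin 3) (Fin 3) ℝ × (Fin 3 → ℝ)

/-- The stabilizer `SO(Q_ξ)` of `Q_ξ(x) = Q(x+ξ)` in `SL(3,ℝ) ⋉ ℝ³`. -/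
def SOQxi (A : Matrix (Fin 3) (Fin 3) ℝ) (ξ : Fin 3 → ℝ) : Set Aff :=
  {p | p.1.det = 1 ∧ ∀ x : Fin 3 → ℝ,
    (p.1.mulVec x + p.2 + ξ) ⬝ᵥ A.mulVec (p.1.mulVec x + p.2 + ξ)
      = (x + ξ) ⬝ᵥ A.mulVec (x + ξ)}

open NormedSpace

local notation "M3" => Matrix (Fin 3) (Fin 3) ℝ

lemma quad_eq' (B C : M3) (hB : Bᵀ = B) (hC : Cᵀ = C) (b c : Fin 3 → ℝ) (k k' : ℝ)
    (h : ∀ x : Fin 3 → ℝ, x ⬝ᵥ B *ᵥ x + 2*(x ⬝ᵥ b) + k = x ⬝ᵥ C *ᵥ x + 2*(x ⬝ᵥ c) + k') :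
    B = C ∧ b = c := by
  have hBs : ∀ i j, B j i = B i j := fun i j => congrFun (congrFun hB i) j
  have hCs : ∀ i j, C j i = C i j := fun i j => congrFun (congrFun hC i) j
  have h0 := h 0
  have e0 := h ![1,0,0]
  have e0' := h ![-1,0,0]
  have e1 := h ![0,1,0]
  have e1' := h ![0,-1,0]
  have e2 := h ![0,0,1]
  have e2' := h ![0,0,-1]
  have e01 := h ![1,1,0]
  have e02 := h ![1,0,1]
  have e12 := h ![0,1,1]
  simp [dotProduct, mulVec, Fin.sum_univ_three] at h0 e0 e0' e1 e1' e2 e2' e01 e02 e12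
  have s1 := hBs 0 1; have s2 := hBs 0 2; have s3 := hBs 1 2
  have t1 := hCs 0 1; have t2 := hCs 0 2; have t3 := hCs 1 2
  have hb0 : b 0 = c 0 := by linarith
  have hb1 : b 1 = c 1 := by linarith
  have hb2 : b 2 = c 2 := by linarith
  have d00 : B 0 0 = C 0 0 := by linarith
  have d11 : B 1 1 = C 1 1 := by linarith
  have d22 : B 2 2 = C 2 2 := by linarith
  have d01 : B 0 1 = C 0 1 := by linarith
  have d02 : B 0 2 = C 0 2 := by linarith
  have d12 : B 1 2 = C 1 2 := by linarith
  have d10 : B 1 0 = C 1 0 := by linarith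
  have d20 : B 2 0 = C 2 0 := by linarith
  have d21 : B 2 1 = C 2 1 := by linarith
  refine ⟨?_, ?_⟩
  · ext i j; fin_cases i <;> fin_cases j <;> assumption
  · funext i; fin_cases i <;> assumption

lemma dot_expand' (A : M3) (hA : Aᵀ = A) (g : M3) (w x : Fin 3 → ℝ) :
    (g *ᵥ x + w) ⬝ᵥ A *ᵥ (g *ᵥ x + w)
      = x ⬝ᵥ (gᵀ * A * g) *ᵥ x + 2 * (x ⬝ᵥ (gᵀ * A) *ᵥ w) + w ⬝ᵥ A *ᵥ w := by
  have key : ∀ y z : Fin 3 → ℝ, (g *ᵥ y) ⬝ᵥ A *ᵥ z = y ⬝ᵥ (gᵀ * A) *ᵥ z := by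
    intro y z
    rw [dotProduct_comm, dotProduct_mulVec, ← mulVec_transpose, mulVec_mulVec,
      dotProduct_comm, dotProduct_mulVec, ← mulVec_transpose, transpose_mul,
      transpose_transpose, hA]
  have sym : ∀ y z : Fin 3 → ℝ, y ⬝ᵥ A *ᵥ z = z ⬝ᵥ A *ᵥ y := by
    intro y z
    rw [dotProduct_mulVec, ← mulVec_transpose, hA, dotProduct_comm]
  rw [add_dotProduct, mulVec_add, dotProduct_add, dotProduct_add]
  have h1 : (g *ᵥ x) ⬝ᵥ A *ᵥ (g *ᵥ x) = x ⬝ᵥ (gᵀ * A * g) *ᵥ x := by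
    rw [key, mulVec_mulVec]
  have h2 : (g *ᵥ x) ⬝ᵥ A *ᵥ w = x ⬝ᵥ (gᵀ * A) *ᵥ w := key x w
  have h3 : w ⬝ᵥ A *ᵥ (g *ᵥ x) = x ⬝ᵥ (gᵀ * A) *ᵥ w := by rw [sym, key]
  rw [h1, h2, h3]; ring

lemma mem_SOQxi_iff' (A : M3) (hA : Aᵀ = A) (hAd : A.det ≠ 0) (ξ : Fin 3 → ℝ)
    (g : M3) (v : Fin 3 → ℝ) :
    (g, v) ∈ SOQxi A ξ ↔ g.det = 1 ∧ gᵀ * A * g = A ∧ v = g *ᵥ ξ - ξ := by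
  have hAu : IsUnit A.det := isUnit_iff_ne_zero.2 hAd
  have hrhs : ∀ x : Fin 3 → ℝ, (x + ξ) ⬝ᵥ A *ᵥ (x + ξ)
      = x ⬝ᵥ A *ᵥ x + 2 * (x ⬝ᵥ A *ᵥ ξ) + ξ ⬝ᵥ A *ᵥ ξ := by
    intro x
    have := dot_expand' A hA 1 ξ x
    simpa using this
  constructor
  · rintro ⟨hd, hq⟩
    have hgu : IsUnit g.det := by rw [hd]; exact isUnit_one
    have hq' : ∀ x : Fin 3 → ℝ,
        x ⬝ᵥ (gᵀ * A * g) *ᵥ x + 2 * (x ⬝ᵥ (gᵀ * A) *ᵥ (v + ξ)) + (v + ξ) ⬝ᵥ A *ᵥ (v + ξ)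
          = x ⬝ᵥ A *ᵥ x + 2 * (x ⬝ᵥ A *ᵥ ξ) + ξ ⬝ᵥ A *ᵥ ξ := by
      intro x
      have hx := hq x
      rw [add_assoc, dot_expand' A hA g (v + ξ) x, hrhs x] at hx
      exact hx
    have hBsym : (gᵀ * A * g)ᵀ = gᵀ * A * g := by
      rw [transpose_mul, transpose_mul, transpose_transpose, hA, mul_assoc]
    obtain ⟨hBC, hbc⟩ := quad_eq' _ _ hBsym hA _ _ _ _ hq'
    refine ⟨hd, hBC, ?_⟩
    have h1 : gᵀ * A = A * g⁻¹ := by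
      have := congrArg (fun M => M * g⁻¹) hBC
      simpa [mul_assoc, Matrix.mul_nonsing_inv g hgu] using this
    rw [h1] at hbc
    have h2 := congrArg (fun y => A⁻¹ *ᵥ y) hbc
    simp only [mulVec_mulVec, ← Matrix.mul_assoc, Matrix.nonsing_inv_mul A hAu,
      Matrix.one_mul] at h2
    have h3 : g⁻¹ *ᵥ (v + ξ) = ξ := by
      rw [h2, one_mulVec]
    have h4 := congrArg (fun y => g *ᵥ y) h3
    simp only [mulVec_mulVec, Matrix.mul_nonsing_inv g hgu, one_mulVec] at h4
    rw [← h4]; abel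
  · rintro ⟨hd, hq, hv⟩
    refine ⟨hd, fun x => ?_⟩
    have harg : g *ᵥ x + v + ξ = g *ᵥ (x + ξ) := by
      rw [hv, mulVec_add]; funext i; simp [Pi.add_apply, Pi.sub_apply]; ring
    have := dot_expand' A hA g 0 (x + ξ)
    simp only [add_zero, dotProduct_zero, mulVec_zero, mul_zero] at this
    rw [harg, this, hq]

lemma conj_exp' (σ : M3) (hσ : σᵀ = σ) (hdet : σ.det ≠ 0) (S : M3) (hS : Sᵀ = -S) (t : ℝ) :
    (exp (t • (σ⁻¹ * S)))ᵀ * σ * exp (t • (σ⁻¹ * S)) = σ := by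
  have hu : IsUnit σ := (Matrix.isUnit_iff_isUnit_det σ).2 (isUnit_iff_ne_zero.2 hdet)
  set X : M3 := σ⁻¹ * S with hX
  have hinvT : (σ⁻¹)ᵀ = σ⁻¹ := by rw [Matrix.transpose_nonsing_inv, hσ]
  have hXT : Xᵀ = -(S * σ⁻¹) := by
    rw [hX, Matrix.transpose_mul, hinvT, hS]; noncomm_ring
  have hconj : (t • X)ᵀ = σ * (-(t • X)) * σ⁻¹ := by
    rw [Matrix.transpose_smul, hXT]
    rw [hX]
    rw [show σ * -(t • (σ⁻¹ * S)) * σ⁻¹ = -(t • (σ * σ⁻¹ * S * σ⁻¹)) by noncomm_ring]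
    rw [Matrix.mul_nonsing_inv σ (isUnit_iff_ne_zero.2 hdet), one_mul]
    rw [smul_neg]
  have h1 : (exp (t • X))ᵀ = σ * exp (-(t • X)) * σ⁻¹ := by
    rw [← Matrix.exp_transpose, hconj, Matrix.exp_conj σ _ hu]
  rw [h1]
  rw [mul_assoc (σ * exp (-(t • X))) σ⁻¹ σ,
    Matrix.nonsing_inv_mul σ (isUnit_iff_ne_zero.2 hdet), mul_one,
    mul_assoc, ← Matrix.exp_add_of_commute _ _ (Commute.neg_left (Commute.refl (t • X))), neg_add_cancel,
    exp_zero, mul_one]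

lemma deriv_conj' (X A : M3) (h : ∀ t : ℝ, exp (t • Xᵀ) * (A * exp (t • X)) = A) :
    Xᵀ * A + A * X = 0 := by
  letI : SeminormedRing M3 := Matrix.linftyOpSemiNormedRing
  letI : NormedRing M3 := Matrix.linftyOpNormedRing
  letI : NormedAlgebra ℝ M3 := Matrix.linftyOpNormedAlgebra
  have h1 : HasDerivAt (fun t : ℝ => exp (t • Xᵀ) * (A * exp (t • X)))
      (Xᵀ * (A * exp ((0:ℝ) • X)) + exp ((0:ℝ) • Xᵀ) * (A * X)) 0 := by
    have hf : HasDerivAt (fun t : ℝ => exp (t • Xᵀ)) (Xᵀ) 0 := by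
      have := hasDerivAt_exp_smul_const (𝕂 := ℝ) Xᵀ (0:ℝ)
      simp at this; exact this
    have hg : HasDerivAt (fun t : ℝ => A * exp (t • X)) (A * X) 0 := by
      have := (hasDerivAt_exp_smul_const (𝕂 := ℝ) X (0:ℝ)).const_mul A
      simp [mul_assoc] at this; exact this
    have := hf.mul hg
    simp at this ⊢; exact this
  have h2 : HasDerivAt (fun _ : ℝ => A) (0 : M3) 0 := hasDerivAt_const _ _
  have h3 : HasDerivAt (fun t : ℝ => exp (t • Xᵀ) * (A * exp (t • X))) (0 : M3) 0 := by
    simpa [h] using h2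
  have := h1.unique h3
  simpa using this

lemma deriv_fix' (X : M3) (d : Fin 3 → ℝ) (h : ∀ t : ℝ, exp (t • X) *ᵥ d = d) :
    X *ᵥ d = 0 := by
  letI : SeminormedRing M3 := Matrix.linftyOpSemiNormedRing
  letI : NormedRing M3 := Matrix.linftyOpNormedRing
  letI : NormedAlgebra ℝ M3 := Matrix.linftyOpNormedAlgebra
  set D : M3 := Matrix.of (fun i _ => d i) with hDdef
  have hD : ∀ t : ℝ, exp (t • X) * D = D := by
    intro t
    ext i j
    have := congrFun (h t) i
    simpa [Matrix.mul_apply, mulVec, dotProduct, hDdef] using this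
  have h1 : HasDerivAt (fun t : ℝ => exp (t • X) * D) (X * D) 0 := by
    have := (hasDerivAt_exp_smul_const (𝕂 := ℝ) X (0:ℝ)).mul_const D
    simp at this; exact this
  have h2 : HasDerivAt (fun t : ℝ => exp (t • X) * D) (0 : M3) 0 := by
    simp only [hD]; exact hasDerivAt_const (0:ℝ) D
  have hXD : X * D = 0 := h1.unique h2
  funext i
  have := congrFun (congrFun hXD i) 0
  simpa [Matrix.mul_apply, mulVec, dotProduct, hDdef] using this

/-- if `Q` is an indefinite nondegenerate quadratic form with symmetric
matrix `σ`, `Q'` is nondegenerate with symmetric matrix `σ'`, and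
`SO(Q_ξ)° = SO(Q'_{ξ'})°`, then `ξ = ξ'` and `σ = cσ'` for some `c ≠ 0`. -/
theorem stmt8 (σ σ' : Matrix (Fin 3) (Fin 3) ℝ) (hσ : σᵀ = σ) (hσ' : σ'ᵀ = σ')
    (hdet : σ.det ≠ 0) (hdet' : σ'.det ≠ 0)
    (hind : (∃ x : Fin 3 → ℝ, 0 < x ⬝ᵥ σ.mulVec x) ∧ (∃ x : Fin 3 → ℝ, x ⬝ᵥ σ.mulVec x < 0))
    (ξ ξ' : Fin 3 → ℝ)
    (h : connectedComponentIn (SOQxi σ ξ) (1, 0)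
        = connectedComponentIn (SOQxi σ' ξ') (1, 0)) :
    ξ = ξ' ∧ ∃ c : ℝ, c ≠ 0 ∧ σ = c • σ' := by
  letI : SeminormedRing M3 := Matrix.linftyOpSemiNormedRing
  letI : NormedRing M3 := Matrix.linftyOpNormedRing
  letI : NormedAlgebra ℝ M3 := Matrix.linftyOpNormedAlgebra
  have hσu : IsUnit σ.det := isUnit_iff_ne_zero.2 hdet
  -- the one-parameter subgroups lie in the identity component
  have hpath : ∀ S : M3, Sᵀ = -S → ∀ t : ℝ,
      (exp (t • (σ⁻¹ * S)), exp (t • (σ⁻¹ * S)) *ᵥ ξ - ξ) ∈ SOQxi σ' ξ' := by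
    intro S hS
    set X : M3 := σ⁻¹ * S with hXdef
    set c : ℝ → Aff := fun t => (exp (t • X), exp (t • X) *ᵥ ξ - ξ) with hcdef
    have hexp_cont : Continuous fun t : ℝ => exp (t • X) := by
      letI : NormedAlgebra ℚ M3 := Matrix.linftyOpNormedAlgebra
      exact exp_continuous.comp (continuous_id.smul continuous_const)
    have hdet_cont : Continuous fun t : ℝ => (exp (t • X)).det :=
      hexp_cont.matrix_det
    have hsq : ∀ t : ℝ, (exp (t • X)).det ^ 2 = 1 := by
      intro t
      have := congrArg Matrix.det (conj_exp' σ hσ hdet S hS t)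
      rw [Matrix.det_mul, Matrix.det_mul, Matrix.det_transpose] at this
      have h2 : ((exp (t • X)).det ^ 2 - 1) * σ.det = 0 := by ring_nf; nlinarith [this]
      rcases mul_eq_zero.1 h2 with h3 | h3
      · linarith
      · exact absurd h3 hdet
    have hdet1 : ∀ t : ℝ, (exp (t • X)).det = 1 := by
      intro t
      by_contra hne
      have ht : (exp (t • X)).det = -1 := by
        have := hsq t
        have h4 : ((exp (t • X)).det - 1) * ((exp (t • X)).det + 1) = 0 := by nlinarith
        rcases mul_eq_zero.1 h4 with h5 | h5
        · exact absurd (by linarith) hne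
        · linarith
      have h0 : (exp ((0:ℝ) • X)).det = 1 := by simp
      have hiv := intermediate_value_univ t 0 hdet_cont
      have h00 : (0:ℝ) ∈ Set.Icc ((fun t : ℝ => (exp (t • X)).det) t)
          ((fun t : ℝ => (exp (t • X)).det) 0) := by
        simp only [ht, h0]
        constructor <;> norm_num
      obtain ⟨s, hs⟩ := hiv h00
      have hs0 : (exp (s • X)).det = 0 := hs
      have := hsq s
      rw [hs0] at this
      norm_num at this
    have hmem : ∀ t : ℝ, c t ∈ SOQxi σ ξ := by
      intro t
      rw [hcdef]
      rw [mem_SOQxi_iff' σ hσ hdet ξ]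
      exact ⟨hdet1 t, conj_exp' σ hσ hdet S hS t, rfl⟩
    have hc0 : c 0 = ((1 : M3), (0 : Fin 3 → ℝ)) := by
      simp [hcdef]
    have hcont : Continuous c := by
      refine hexp_cont.prodMk ?_
      exact (hexp_cont.matrix_mulVec continuous_const).sub continuous_const
    have hconn : IsPreconnected (Set.range c) := by
      rw [← Set.image_univ]
      exact isPreconnected_univ.image c hcont.continuousOn
    have hsub : Set.range c ⊆ connectedComponentIn (SOQxi σ ξ) (1, 0) := by
      apply hconn.subset_connectedComponentIn
      · exact ⟨0, hc0⟩
      · rintro p ⟨t, rfl⟩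
        exact hmem t
    intro t
    have h1 : c t ∈ connectedComponentIn (SOQxi σ' ξ') (1, 0) := by
      rw [← h]
      exact hsub ⟨t, rfl⟩
    exact connectedComponentIn_subset _ _ h1
  -- extract conditions with respect to σ', ξ'
  have hcond : ∀ S : M3, Sᵀ = -S →
      ((σ⁻¹ * S)ᵀ * σ' + σ' * (σ⁻¹ * S) = 0) ∧ (σ⁻¹ * S) *ᵥ (ξ - ξ') = 0 := by
    intro S hS
    set X : M3 := σ⁻¹ * S with hXdef
    have hm : ∀ t : ℝ, (exp (t • X))ᵀ * σ' * exp (t • X) = σ' ∧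
        exp (t • X) *ᵥ ξ - ξ = exp (t • X) *ᵥ ξ' - ξ' := by
      intro t
      have := (mem_SOQxi_iff' σ' hσ' hdet' ξ' _ _).1 (hpath S hS t)
      exact ⟨this.2.1, this.2.2⟩
    constructor
    · apply deriv_conj'
      intro t
      have h1 := (hm t).1
      have h2 : (exp (t • X))ᵀ = exp (t • Xᵀ) := by
        rw [← Matrix.exp_transpose, Matrix.transpose_smul]
      rw [h2, mul_assoc] at h1
      exact h1
    · apply deriv_fix'
      intro t
      have h1 := (hm t).2
      rw [mulVec_sub]
      funext i
      have := congrFun h1 i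
      simp only [Pi.sub_apply] at this ⊢
      linarith
  -- skew matrices
  have hS1 : (!![0,1,0;-1,0,0;0,0,0] : M3)ᵀ = -!![0,1,0;-1,0,0;0,0,0] := by
    ext i j; fin_cases i <;> fin_cases j <;> norm_num
  have hS2 : (!![0,0,1;0,0,0;-1,0,0] : M3)ᵀ = -!![0,0,1;0,0,0;-1,0,0] := by
    ext i j; fin_cases i <;> fin_cases j <;> norm_num
  have hS3 : (!![0,0,0;0,0,1;0,-1,0] : M3)ᵀ = -!![0,0,0;0,0,1;0,-1,0] := by
    ext i j; fin_cases i <;> fin_cases j <;> norm_num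
  -- first conclusion : ξ = ξ'
  have hfix : ∀ S : M3, Sᵀ = -S → S *ᵥ (ξ - ξ') = 0 := by
    intro S hS
    have h1 := (hcond S hS).2
    have h2 := congrArg (fun y => σ *ᵥ y) h1
    simpa [mulVec_mulVec, ← Matrix.mul_assoc, Matrix.mul_nonsing_inv σ hσu] using h2
  have hxi : ξ = ξ' := by
    have f1 := hfix _ hS1
    have f2 := hfix _ hS2
    funext i
    have g1 := congrFun f1 0
    have g2 := congrFun f1 1
    have g3 := congrFun f2 0
    simp [mulVec, dotProduct, Fin.sum_univ_three] at g1 g2 g3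
    fin_cases i <;> simp [Pi.sub_apply] <;> linarith
  refine ⟨hxi, ?_⟩
  -- second conclusion : σ = c • σ'
  have hlie : ∀ S : M3, Sᵀ = -S → (σ' * σ⁻¹) * S = S * (σ⁻¹ * σ') := by
    intro S hS
    have h1 := (hcond S hS).1
    have hinvT : (σ⁻¹)ᵀ = σ⁻¹ := by rw [Matrix.transpose_nonsing_inv, hσ]
    rw [Matrix.transpose_mul, hinvT, hS] at h1
    have : σ' * (σ⁻¹ * S) = S * (σ⁻¹ * σ') := by
      have h2 : -S * σ⁻¹ * σ' + σ' * (σ⁻¹ * S) = 0 := h1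
      have h3 := congrArg (fun M => M + S * σ⁻¹ * σ') h2
      simpa [Matrix.neg_mul, Matrix.mul_assoc, add_assoc] using h3
    rw [← this, Matrix.mul_assoc]
  set A : M3 := σ' * σ⁻¹ with hAdef
  set B : M3 := σ⁻¹ * σ' with hBdef
  have e1 : A * !![0,1,0;-1,0,0;0,0,0] = !![0,1,0;-1,0,0;0,0,0] * B := hlie _ hS1
  have e2 : A * !![0,0,1;0,0,0;-1,0,0] = !![0,0,1;0,0,0;-1,0,0] * B := hlie _ hS2
  have e3 : A * !![0,0,0;0,0,1;0,-1,0] = !![0,0,0;0,0,1;0,-1,0] * B := hlie _ hS3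
  obtain ⟨c0, hA⟩ : ∃ c0 : ℝ, A = c0 • (1 : M3) := by
    refine ⟨A 0 0, ?_⟩
    have q1 := congrFun (congrFun e1 2) 0
    have q2 := congrFun (congrFun e1 2) 1
    have q3 := congrFun (congrFun e3 0) 1
    have q4 := congrFun (congrFun e3 0) 2
    have q5 := congrFun (congrFun e2 1) 0
    have q6 := congrFun (congrFun e2 1) 2
    have q7 := congrFun (congrFun e1 0) 1   -- A00 = B11
    have q8 := congrFun (congrFun e1 1) 0   -- -A11 = -B00
    have q9 := congrFun (congrFun e2 0) 2   -- A00 = B22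
    have q10 := congrFun (congrFun e3 1) 2  -- A11 = B22
    have q11 := congrFun (congrFun e2 2) 0  -- -A22 = -B00
    simp [Matrix.mul_apply, Fin.sum_univ_three, Matrix.vecHead, Matrix.vecTail] at q1 q2 q3 q4 q5 q6 q7 q8 q9 q10 q11
    ext i j
    fin_cases i <;> fin_cases j <;> simp [Matrix.smul_apply, Matrix.one_apply] <;> linarith
  have hσ'eq : σ' = c0 • σ := by
    have h1 : A * σ = σ' := by
      rw [hAdef, Matrix.mul_assoc, Matrix.nonsing_inv_mul σ hσu, Matrix.mul_one]
    rw [← h1, hA, Matrix.smul_mul, Matrix.one_mul]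
  have hc0 : c0 ≠ 0 := by
    intro hc
    rw [hc, zero_smul] at hσ'eq
    rw [hσ'eq] at hdet'
    simp [Matrix.det_zero] at hdet'
  refine ⟨c0⁻¹, inv_ne_zero hc0, ?_⟩
  rw [hσ'eq, smul_smul, inv_mul_cancel₀ hc0, one_smul]
end

section
/- The Lie algebra so(2,1) is a maximal proper Lie subalgebra of sl(3,R): there is no Lie subalgebra h with so(2,1) ⊊ h ⊊ sl(3,R). -/
open Matrix

attribute [local instance 100] LieRing.ofAssociativeRing

/-- The diagonal matrix `J = diag(1,1,-1)`. -/
def Jmat : Matrix (Fin 3) (Fin 3) ℝ := Matrix.diagonal ![1, 1, -1]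

def Me : Matrix (Fin 3) (Fin 3) ℝ := !![0,1,0;-1,0,1;0,1,0]
def Mf : Matrix (Fin 3) (Fin 3) ℝ := !![0,-1,0;1,0,1;0,1,0]
def M4 : Matrix (Fin 3) (Fin 3) ℝ := !![1,0,-1;0,0,0;1,0,-1]
def M2 : Matrix (Fin 3) (Fin 3) ℝ := !![0,1,0;1,0,-1;0,1,0]
def M0 : Matrix (Fin 3) (Fin 3) ℝ := !![-1,0,0;0,2,0;0,0,-1]
def Mm2 : Matrix (Fin 3) (Fin 3) ℝ := !![0,1,0;1,0,1;0,-1,0]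
def Mm4 : Matrix (Fin 3) (Fin 3) ℝ := !![1,0,1;0,0,0;-1,0,-1]

lemma hMe_so : Meᵀ * Jmat + Jmat * Me = 0 := by
  ext i j
  fin_cases i <;> fin_cases j <;>
    · simp [Jmat, Me, Matrix.mul_apply, Matrix.transpose_apply, Fin.sum_univ_three,
        Matrix.vecHead, Matrix.vecTail, Matrix.diagonal]
      try norm_num

lemma hMf_so : Mfᵀ * Jmat + Jmat * Mf = 0 := by
  ext i j
  fin_cases i <;> fin_cases j <;>
    · simp [Jmat, Mf, Matrix.mul_apply, Matrix.transpose_apply, Fin.sum_univ_three,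
        Matrix.vecHead, Matrix.vecTail, Matrix.diagonal]
      try norm_num

lemma hs2_so (X : Matrix (Fin 3) (Fin 3) ℝ) :
    (X - Jmat * Xᵀ * Jmat)ᵀ * Jmat + Jmat * (X - Jmat * Xᵀ * Jmat) = 0 := by
  ext i j
  fin_cases i <;> fin_cases j <;>
    · simp [Jmat, Matrix.mul_apply, Matrix.transpose_apply, Fin.sum_univ_three,
        Matrix.vecHead, Matrix.vecTail, Matrix.diagonal]
      try ring

lemma key_ident (X : Matrix (Fin 3) (Fin 3) ℝ) :
    Xᵀ * Jmat + Jmat * X = Jmat * (X + Jmat * Xᵀ * Jmat) := by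
  ext i j
  fin_cases i <;> fin_cases j <;>
    · simp [Jmat, Matrix.mul_apply, Matrix.transpose_apply, Fin.sum_univ_three,
        Matrix.vecHead, Matrix.vecTail, Matrix.diagonal]
      try ring

lemma key_decomp (X : Matrix (Fin 3) (Fin 3) ℝ) (htr : X.trace = 0) :
    (4:ℝ) • (X + Jmat * Xᵀ * Jmat) =
      (4 * X 0 0 + 2 * X 1 1 - 2 * (X 0 2 - X 2 0)) • M4
      + (2 * (X 0 1 + X 1 0) - 2 * (X 1 2 - X 2 1)) • M2
      + (4 * X 1 1) • M0
      + (2 * (X 0 1 + X 1 0) + 2 * (X 1 2 - X 2 1)) • Mm2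
      + (4 * X 0 0 + 2 * X 1 1 + 2 * (X 0 2 - X 2 0)) • Mm4 := by
  rw [Matrix.trace_fin_three] at htr
  ext i j
  fin_cases i <;> fin_cases j <;>
    · simp [Jmat, M4, M2, M0, Mm2, Mm4, Matrix.mul_apply, Matrix.transpose_apply,
        Fin.sum_univ_three, Matrix.vecHead, Matrix.vecTail, Matrix.diagonal]
      try linarith

set_option maxHeartbeats 1000000 in
lemma step_e (r4 r2 r0 rm2 rm4 : ℝ) :
    ⁅Me, r4•M4 + r2•M2 + r0•M0 + rm2•Mm2 + rm4•Mm4⁆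
    = (2*r2)•M4 + (3*r0)•M2 + (-(2*rm2))•M0 + (-(2*rm4))•Mm2 + (0:ℝ)•Mm4 := by
  ext i j
  fin_cases i <;> fin_cases j <;>
    · simp [Ring.lie_def, Me, M4, M2, M0, Mm2, Mm4, Matrix.mul_apply,
        Fin.sum_univ_three]
      ring

lemma lie_f_M4 : ⁅Mf, M4⁆ = (2:ℝ) • M2 := by
  ext i j
  fin_cases i <;> fin_cases j <;>
    · simp [Ring.lie_def, Mf, M4, M2, Matrix.mul_apply, Fin.sum_univ_three,
        Matrix.vecHead, Matrix.vecTail]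
      try norm_num

lemma lie_f_M2 : ⁅Mf, M2⁆ = (2:ℝ) • M0 := by
  ext i j
  fin_cases i <;> fin_cases j <;>
    · simp [Ring.lie_def, Mf, M2, M0, Matrix.mul_apply, Fin.sum_univ_three,
        Matrix.vecHead, Matrix.vecTail]
      try norm_num

lemma lie_f_M0 : ⁅Mf, M0⁆ = (-3:ℝ) • Mm2 := by
  ext i j
  fin_cases i <;> fin_cases j <;>
    · simp [Ring.lie_def, Mf, M0, Mm2, Matrix.mul_apply, Fin.sum_univ_three,
        Matrix.vecHead, Matrix.vecTail]
      try norm_num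

lemma lie_f_Mm2 : ⁅Mf, Mm2⁆ = (-2:ℝ) • Mm4 := by
  ext i j
  fin_cases i <;> fin_cases j <;>
    · simp [Ring.lie_def, Mf, Mm2, Mm4, Matrix.mul_apply, Fin.sum_univ_three,
        Matrix.vecHead, Matrix.vecTail]
      try norm_num

lemma mem_of_smul {k : LieSubalgebra ℝ (Matrix (Fin 3) (Fin 3) ℝ)} {t : ℝ}
    {w m : Matrix (Fin 3) (Fin 3) ℝ} (ht : t ≠ 0) (h : w = t • m) (hw : w ∈ k) :
    m ∈ k := by
  have h2 := k.smul_mem t⁻¹ hw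
  rw [h, smul_smul, inv_mul_cancel₀ ht, one_smul] at h2
  exact h2

lemma top_mem (k : LieSubalgebra ℝ (Matrix (Fin 3) (Fin 3) ℝ)) (hek : Me ∈ k)
    (q4 q2 q0 qm2 qm4 : ℝ) (w : Matrix (Fin 3) (Fin 3) ℝ) (hwk : w ∈ k)
    (hw : w = q4•M4 + q2•M2 + q0•M0 + qm2•Mm2 + qm4•Mm4)
    (hnz : ¬(q4 = 0 ∧ q2 = 0 ∧ q0 = 0 ∧ qm2 = 0 ∧ qm4 = 0)) : M4 ∈ k := by
  have hw1 : ⁅Me, w⁆ = (2*q2)•M4 + (3*q0)•M2 + (-(2*qm2))•M0 + (-(2*qm4))•Mm2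
      + (0:ℝ)•Mm4 := by rw [hw]; exact step_e _ _ _ _ _
  have hw2 : ⁅Me, ⁅Me, w⁆⁆ = (2*(3*q0))•M4 + (3*(-(2*qm2)))•M2 + (-(2*(-(2*qm4))))•M0
      + (-(2*(0:ℝ)))•Mm2 + (0:ℝ)•Mm4 := by rw [hw1]; exact step_e _ _ _ _ _
  have hw3 : ⁅Me, ⁅Me, ⁅Me, w⁆⁆⁆ = (2*(3*(-(2*qm2))))•M4 + (3*(-(2*(-(2*qm4)))))•M2
      + (-(2*(-(2*(0:ℝ)))))•M0 + (-(2*(0:ℝ)))•Mm2 + (0:ℝ)•Mm4 := by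
    rw [hw2]; exact step_e _ _ _ _ _
  have hw4 : ⁅Me, ⁅Me, ⁅Me, ⁅Me, w⁆⁆⁆⁆ = (2*(3*(-(2*(-(2*qm4))))))•M4
      + (3*(-(2*(-(2*(0:ℝ))))))•M2 + (-(2*(-(2*(0:ℝ)))))•M0 + (-(2*(0:ℝ)))•Mm2
      + (0:ℝ)•Mm4 := by rw [hw3]; exact step_e _ _ _ _ _
  have hw1k : ⁅Me, w⁆ ∈ k := k.lie_mem hek hwk
  have hw2k : ⁅Me, ⁅Me, w⁆⁆ ∈ k := k.lie_mem hek hw1k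
  have hw3k : ⁅Me, ⁅Me, ⁅Me, w⁆⁆⁆ ∈ k := k.lie_mem hek hw2k
  have hw4k : ⁅Me, ⁅Me, ⁅Me, ⁅Me, w⁆⁆⁆⁆ ∈ k := k.lie_mem hek hw3k
  by_cases h4 : qm4 ≠ 0
  · refine mem_of_smul (t := 24 * qm4) (by simpa using h4) ?_ hw4k
    rw [hw4]; module
  push_neg at h4
  by_cases h3 : qm2 ≠ 0
  · refine mem_of_smul (t := -(12 * qm2)) (by simpa using h3) ?_ hw3k
    rw [hw3, h4]; module
  push_neg at h3
  by_cases h2 : q0 ≠ 0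
  · refine mem_of_smul (t := 6 * q0) (by simpa using h2) ?_ hw2k
    rw [hw2, h3, h4]; module
  push_neg at h2
  by_cases h1 : q2 ≠ 0
  · refine mem_of_smul (t := 2 * q2) (by simpa using h1) ?_ hw1k
    rw [hw1, h2, h3, h4]; module
  push_neg at h1
  by_cases h0 : q4 ≠ 0
  · refine mem_of_smul (t := q4) h0 ?_ hwk
    rw [hw, h1, h2, h3, h4]; module
  push_neg at h0
  exact absurd ⟨h0, h1, h2, h3, h4⟩ hnz

/-- `so(2,1) = {X | XᵀJ + JX = 0}` is a maximal proper Lie subalgebra of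
`sl(3,ℝ) = {X | tr X = 0}`: any Lie subalgebra squeezed between them is one of the two. -/
theorem stmt10 (k : LieSubalgebra ℝ (Matrix (Fin 3) (Fin 3) ℝ))
    (h1 : {X : Matrix (Fin 3) (Fin 3) ℝ | Xᵀ * Jmat + Jmat * X = 0}
      ⊆ (k : Set (Matrix (Fin 3) (Fin 3) ℝ)))
    (h2 : (k : Set (Matrix (Fin 3) (Fin 3) ℝ))
      ⊆ {X : Matrix (Fin 3) (Fin 3) ℝ | X.trace = 0}) :
    (k : Set (Matrix (Fin 3) (Fin 3) ℝ)) = {X | Xᵀ * Jmat + Jmat * X = 0} ∨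
    (k : Set (Matrix (Fin 3) (Fin 3) ℝ)) = {X | X.trace = 0} := by
  by_cases hsub : (k : Set (Matrix (Fin 3) (Fin 3) ℝ))
      ⊆ {X : Matrix (Fin 3) (Fin 3) ℝ | Xᵀ * Jmat + Jmat * X = 0}
  · exact Or.inl (Set.Subset.antisymm hsub h1)
  right
  obtain ⟨X, hXk, hX⟩ := Set.not_subset.mp hsub
  have hXk' : X ∈ k := hXk
  have htr : X.trace = 0 := h2 hXk
  have hXne : Xᵀ * Jmat + Jmat * X ≠ 0 := hX
  have hvk : X + Jmat * Xᵀ * Jmat ∈ k := by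
    have hs : X - Jmat * Xᵀ * Jmat ∈ k := h1 (hs2_so X)
    have hrw : X + Jmat * Xᵀ * Jmat = (2:ℝ) • X - (X - Jmat * Xᵀ * Jmat) := by
      module
    rw [hrw]
    exact k.sub_mem (k.smul_mem _ hXk') hs
  have hwk : (4:ℝ) • (X + Jmat * Xᵀ * Jmat) ∈ k := k.smul_mem _ hvk
  have hw := key_decomp X htr
  have hek : Me ∈ k := h1 hMe_so
  have hfk : Mf ∈ k := h1 hMf_so
  have hnz : ¬((4 * X 0 0 + 2 * X 1 1 - 2 * (X 0 2 - X 2 0)) = 0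
      ∧ (2 * (X 0 1 + X 1 0) - 2 * (X 1 2 - X 2 1)) = 0
      ∧ (4 * X 1 1) = 0
      ∧ (2 * (X 0 1 + X 1 0) + 2 * (X 1 2 - X 2 1)) = 0
      ∧ (4 * X 0 0 + 2 * X 1 1 + 2 * (X 0 2 - X 2 0)) = 0) := by
    rintro ⟨e4, e2, e0, em2, em4⟩
    apply hXne
    have h40 : (4:ℝ) • (X + Jmat * Xᵀ * Jmat) = 0 := by
      rw [hw, e4, e2, e0, em2, em4]
      module
    have hv0 : X + Jmat * Xᵀ * Jmat = 0 := by
      have hh : X + Jmat * Xᵀ * Jmat = (4⁻¹:ℝ) • ((4:ℝ) • (X + Jmat * Xᵀ * Jmat)) := by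
        module
      rw [hh, h40, smul_zero]
    rw [key_ident X, hv0, mul_zero]
  have hM4 : M4 ∈ k := top_mem k hek _ _ _ _ _ _ hwk hw hnz
  have hM2 : M2 ∈ k := mem_of_smul (t := 2) two_ne_zero lie_f_M4 (k.lie_mem hfk hM4)
  have hM0 : M0 ∈ k := mem_of_smul (t := 2) two_ne_zero lie_f_M2 (k.lie_mem hfk hM2)
  have hMm2 : Mm2 ∈ k := mem_of_smul (t := -3) (by norm_num) lie_f_M0 (k.lie_mem hfk hM0)
  have hMm4 : Mm4 ∈ k := mem_of_smul (t := -2) (by norm_num) lie_f_Mm2 (k.lie_mem hfk hMm2)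
  refine Set.Subset.antisymm h2 ?_
  intro Y hY
  have htrY : Y.trace = 0 := hY
  have hdY := key_decomp Y htrY
  have hvYk : (4:ℝ) • (Y + Jmat * Yᵀ * Jmat) ∈ k := by
    rw [hdY]
    exact k.add_mem (k.add_mem (k.add_mem (k.add_mem (k.smul_mem _ hM4)
      (k.smul_mem _ hM2)) (k.smul_mem _ hM0)) (k.smul_mem _ hMm2)) (k.smul_mem _ hMm4)
  have hsYk : Y - Jmat * Yᵀ * Jmat ∈ k := h1 (hs2_so Y)
  have hYrw : Y = (8⁻¹:ℝ) • ((4:ℝ) • (Y + Jmat * Yᵀ * Jmat))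
      + (2⁻¹:ℝ) • (Y - Jmat * Yᵀ * Jmat) := by module
  show Y ∈ k
  rw [hYrw]
  exact k.add_mem (k.smul_mem _ hvYk) (k.smul_mem _ hsYk)
end

section
/- Let Q_ξ be an indefinite, irrational, nondegenerate inhomogeneous quadratic form in n ≥ 3 variables (where irrational means Q is not a scalar multiple of a rational form or ξ is an irrational vector). Then there exists a rational hyperplane L ⊂ R^n such that the restriction of Q_ξ to L is indefinite, irrational, and nondegenerate. -/
open Matrix

namespace S15
set_option maxHeartbeats 1000000
variable {n : ℕ}


noncomputable def cv (v : Fin n → ℚ) : Fin n → ℝ := fun i => (v i : ℝ)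

lemma cv_dot (v w : Fin n → ℚ) : (cv v) ⬝ᵥ (cv w) = ((v ⬝ᵥ w : ℚ) : ℝ) := by
  simp [cv, dotProduct]

lemma cv_sub (v w : Fin n → ℚ) : cv (v - w) = cv v - cv w := by
  funext i; simp [cv]

lemma cv_smul (q : ℚ) (v : Fin n → ℚ) : cv (q • v) = (q : ℝ) • cv v := by
  funext i; simp [cv]

lemma cv_zero : cv (0 : Fin n → ℚ) = 0 := by funext i; simp [cv]

lemma symmBf (A : Matrix (Fin n) (Fin n) ℝ) (hA : Aᵀ = A) (x y : Fin n → ℝ) :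
    x ⬝ᵥ A.mulVec y = y ⬝ᵥ A.mulVec x := by
  rw [Matrix.dotProduct_mulVec, ← Matrix.mulVec_transpose, hA, dotProduct_comm]

lemma expandQ_smul (A : Matrix (Fin n) (Fin n) ℝ) (s t : ℝ) (x y : Fin n → ℝ) :
    (s • x + t • y) ⬝ᵥ A.mulVec (s • x + t • y)
      = s * s * (x ⬝ᵥ A.mulVec x) + s * t * (x ⬝ᵥ A.mulVec y)
        + t * s * (y ⬝ᵥ A.mulVec x) + t * t * (y ⬝ᵥ A.mulVec y) := by
  rw [Matrix.mulVec_add, Matrix.mulVec_smul, Matrix.mulVec_smul]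
  simp only [dotProduct_add, add_dotProduct, smul_dotProduct,
    dotProduct_smul, smul_eq_mul]
  ring

lemma rat_point_open {s : Set (Fin n → ℝ)} (hs : IsOpen s) {x : Fin n → ℝ} (hx : x ∈ s) :
    ∃ q : Fin n → ℚ, (fun i => (q i : ℝ)) ∈ s := by
  obtain ⟨ε, hε, hball⟩ := Metric.isOpen_iff.1 hs x hx
  have hq : ∀ i : Fin n, ∃ q : ℚ, |x i - (q:ℝ)| < ε / 2 :=
    fun i => exists_rat_near (x i) (by linarith)
  choose q hq using hq
  refine ⟨q, hball ?_⟩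
  rw [Metric.mem_ball, dist_pi_lt_iff hε]
  intro i
  rw [Real.dist_eq]
  have := hq i
  rw [abs_sub_comm] at this
  linarith [this]

lemma buildL (A : Matrix (Fin n) (Fin n) ℝ) (hA : Aᵀ = A) (hdet : A.det ≠ 0) (hn : 3 ≤ n)
    (xs x : Fin n → ℚ)
    (hqs : (cv xs) ⬝ᵥ A.mulVec (cv xs) ≠ 0)
    (hdisc : 0 < ((cv x) ⬝ᵥ A.mulVec (cv xs))^2
        - ((cv x) ⬝ᵥ A.mulVec (cv x)) * ((cv xs) ⬝ᵥ A.mulVec (cv xs))) :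
    ∃ l : Fin n → ℚ,
      (cv l) ⬝ᵥ (cv x) = 0 ∧ (cv l) ⬝ᵥ (cv xs) = 0 ∧
      (cv l) ⬝ᵥ A⁻¹.mulVec (cv l) ≠ 0 ∧ l ≠ 0 ∧
      (∃ v : Fin n → ℝ, (cv l) ⬝ᵥ v = 0 ∧ 0 < v ⬝ᵥ A.mulVec v) ∧
      (∃ v : Fin n → ℝ, (cv l) ⬝ᵥ v = 0 ∧ v ⬝ᵥ A.mulVec v < 0) := by
  set X := cv x with hX
  set Xs := cv xs with hXs
  set g11 := X ⬝ᵥ A.mulVec X with hg11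
  set g12 := X ⬝ᵥ A.mulVec Xs with hg12
  set g22 := Xs ⬝ᵥ A.mulVec Xs with hg22
  have hd : 0 < g12^2 - g11 * g22 := hdisc
  have hdne : g11 * g22 - g12^2 ≠ 0 := by nlinarith
  -- independence w.r.t. B
  have hindep : ∀ a b : ℝ, a • X + b • Xs = 0 → a = 0 ∧ b = 0 := by
    intro a b hab
    have e1 : a * g11 + b * g12 = 0 := by
      have : (a • X + b • Xs) ⬝ᵥ A.mulVec X = 0 := by rw [hab]; simp
      rw [add_dotProduct, smul_dotProduct, smul_dotProduct] at this
      simp only [smul_eq_mul] at this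
      rw [symmBf A hA Xs X] at this
      linarith [this]
    have e2 : a * g12 + b * g22 = 0 := by
      have : (a • X + b • Xs) ⬝ᵥ A.mulVec Xs = 0 := by rw [hab]; simp
      rw [add_dotProduct, smul_dotProduct, smul_dotProduct] at this
      simp only [smul_eq_mul] at this
      linarith [this]
    constructor
    · have ha : a * (g11 * g22 - g12^2) = 0 := by linear_combination g22 * e1 - g12 * e2
      exact (mul_eq_zero.1 ha).resolve_right hdne
    · have hb : b * (g11 * g22 - g12^2) = 0 := by linear_combination g11 * e2 - g12 * e1
      exact (mul_eq_zero.1 hb).resolve_right hdne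
  -- mulVec injectivity
  have hinj : ∀ u : Fin n → ℝ, A.mulVec u = 0 → u = 0 := by
    intro u hu
    have : A⁻¹.mulVec (A.mulVec u) = 0 := by rw [hu, Matrix.mulVec_zero]
    rwa [Matrix.mulVec_mulVec, Matrix.nonsing_inv_mul A (isUnit_iff_ne_zero.2 hdet),
      Matrix.one_mulVec] at this
  -- a nonzero vector B-orthogonal to X and Xs
  obtain ⟨u₁, hu₁X, hu₁Xs, hu₁ne⟩ :
      ∃ u : Fin n → ℝ, u ⬝ᵥ A.mulVec X = 0 ∧ u ⬝ᵥ A.mulVec Xs = 0 ∧ u ≠ 0 := by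
    let L1 : (Fin n → ℝ) →ₗ[ℝ] ℝ :=
      { toFun := fun u => u ⬝ᵥ A.mulVec X
        map_add' := fun a b => add_dotProduct a b _
        map_smul' := fun c a => smul_dotProduct c a _ }
    let L2 : (Fin n → ℝ) →ₗ[ℝ] ℝ :=
      { toFun := fun u => u ⬝ᵥ A.mulVec Xs
        map_add' := fun a b => add_dotProduct a b _
        map_smul' := fun c a => smul_dotProduct c a _ }
    let φ := L1.prod L2
    have hker : LinearMap.ker φ ≠ ⊥ := by
      intro hbot
      have h1 := LinearMap.finrank_range_add_finrank_ker φ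
      rw [hbot, finrank_bot] at h1
      have h2 : Module.finrank ℝ (LinearMap.range φ) ≤ Module.finrank ℝ (ℝ × ℝ) :=
        Submodule.finrank_le _
      have h3 : Module.finrank ℝ (ℝ × ℝ) = 2 := by
        simp [Module.finrank_prod]
      have h4 : Module.finrank ℝ (Fin n → ℝ) = n := by
        simp [Module.finrank_pi]
      omega
    obtain ⟨u, hu, hune⟩ := Submodule.ne_bot_iff _ |>.1 hker
    have := LinearMap.mem_ker.1 hu
    have h1 : φ u = (u ⬝ᵥ A.mulVec X, u ⬝ᵥ A.mulVec Xs) := rfl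
    rw [h1] at this
    exact ⟨u, congrArg Prod.fst this, congrArg Prod.snd this, hune⟩
  -- get u₀ B-orthogonal to X, Xs with Q(u₀) ≠ 0
  obtain ⟨u₀, hu₀X, hu₀Xs, hu₀q⟩ :
      ∃ u : Fin n → ℝ, u ⬝ᵥ A.mulVec X = 0 ∧ u ⬝ᵥ A.mulVec Xs = 0 ∧ u ⬝ᵥ A.mulVec u ≠ 0 := by
    by_cases hq1 : u₁ ⬝ᵥ A.mulVec u₁ ≠ 0
    · exact ⟨u₁, hu₁X, hu₁Xs, hq1⟩
    push_neg at hq1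
    -- find w with B(u₁,w) ≠ 0
    have hAu₁ : A.mulVec u₁ ≠ 0 := fun h => hu₁ne (hinj _ h)
    obtain ⟨k, hk⟩ : ∃ k, A.mulVec u₁ k ≠ 0 := by
      by_contra h; push_neg at h; exact hAu₁ (funext h)
    set w : Fin n → ℝ := Pi.single k 1 with hw
    have hwu₁ : u₁ ⬝ᵥ A.mulVec w ≠ 0 := by
      rw [symmBf A hA, hw, single_dotProduct, one_mul]
      exact hk
    set dB := g11 * g22 - g12^2 with hdB
    set α := ((w ⬝ᵥ A.mulVec X) * g22 - (w ⬝ᵥ A.mulVec Xs) * g12) / dB with hα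
    set β := (g11 * (w ⬝ᵥ A.mulVec Xs) - g12 * (w ⬝ᵥ A.mulVec X)) / dB with hβ
    set w' := w - α • X - β • Xs with hw'
    have hw'X : w' ⬝ᵥ A.mulVec X = 0 := by
      rw [hw', sub_dotProduct, sub_dotProduct, smul_dotProduct,
        smul_dotProduct]
      simp only [smul_eq_mul]
      rw [← hg11]
      have : Xs ⬝ᵥ A.mulVec X = g12 := by rw [symmBf A hA Xs X]
      rw [this, hα, hβ]
      field_simp
      try ring
    have hw'Xs : w' ⬝ᵥ A.mulVec Xs = 0 := by
      rw [hw', sub_dotProduct, sub_dotProduct, smul_dotProduct,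
        smul_dotProduct]
      simp only [smul_eq_mul]
      rw [← hg12, ← hg22, hα, hβ]
      field_simp
      try ring
    have hu₁w' : u₁ ⬝ᵥ A.mulVec w' ≠ 0 := by
      rw [hw', Matrix.mulVec_sub, Matrix.mulVec_sub, Matrix.mulVec_smul, Matrix.mulVec_smul,
        dotProduct_sub, dotProduct_sub, dotProduct_smul,
        dotProduct_smul]
      simp only [smul_eq_mul]
      rw [hu₁X, hu₁Xs]
      simpa using hwu₁
    have hcomb : ∀ s : ℝ, (u₁ + s • w') ⬝ᵥ A.mulVec (u₁ + s • w')
        = 2 * s * (u₁ ⬝ᵥ A.mulVec w') + s * s * (w' ⬝ᵥ A.mulVec w') := by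
      intro s
      rw [Matrix.mulVec_add, Matrix.mulVec_smul, add_dotProduct,
        dotProduct_add, dotProduct_add, dotProduct_smul,
        smul_dotProduct, smul_dotProduct, dotProduct_smul,
        symmBf A hA w' u₁]
      simp only [smul_eq_mul]
      rw [hq1]
      ring
    have hker' : ∀ s : ℝ, (u₁ + s • w') ⬝ᵥ A.mulVec X = 0 ∧ (u₁ + s • w') ⬝ᵥ A.mulVec Xs = 0 := by
      intro s
      constructor <;>
      · rw [add_dotProduct, smul_dotProduct]
        simp only [smul_eq_mul]
        first
        | rw [hu₁X, hw'X]; ring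
        | rw [hu₁Xs, hw'Xs]; ring
    by_cases hc1 : (u₁ + (1:ℝ) • w') ⬝ᵥ A.mulVec (u₁ + (1:ℝ) • w') ≠ 0
    · exact ⟨_, (hker' 1).1, (hker' 1).2, hc1⟩
    · push_neg at hc1
      refine ⟨_, (hker' (-1)).1, (hker' (-1)).2, ?_⟩
      rw [hcomb] at hc1 ⊢
      intro hc2
      apply hu₁w'
      nlinarith [hc1, hc2]
  -- l₀ := A.mulVec u₀
  set l₀ := A.mulVec u₀ with hl₀
  have hl₀X : l₀ ⬝ᵥ X = 0 := by
    rw [hl₀, dotProduct_comm, symmBf A hA X u₀]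
    exact hu₀X
  have hl₀Xs : l₀ ⬝ᵥ Xs = 0 := by
    rw [hl₀, dotProduct_comm, symmBf A hA Xs u₀]
    exact hu₀Xs
  have hAinvl₀ : A⁻¹.mulVec l₀ = u₀ := by
    rw [hl₀, Matrix.mulVec_mulVec, Matrix.nonsing_inv_mul A (isUnit_iff_ne_zero.2 hdet),
      Matrix.one_mulVec]
  have hQsl₀ : l₀ ⬝ᵥ A⁻¹.mulVec l₀ ≠ 0 := by
    rw [hAinvl₀, hl₀, dotProduct_comm]
    exact hu₀q
  -- standard Gram
  set G11 := X ⬝ᵥ X with hG11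
  set G12 := X ⬝ᵥ Xs with hG12
  set G22 := Xs ⬝ᵥ Xs with hG22
  have hXsne : Xs ≠ 0 := by
    intro h
    apply hqs
    rw [hg22, h, zero_dotProduct]
  have hG22ne : G22 ≠ 0 := by
    intro h
    rw [hG22] at h
    exact hXsne (dotProduct_self_eq_zero.1 h)
  have hΔ : G11 * G22 - G12^2 ≠ 0 := by
    intro hΔ0
    have hv : (G22 • X + (-G12) • Xs) ⬝ᵥ (G22 • X + (-G12) • Xs) = 0 := by
      rw [add_dotProduct, smul_dotProduct, smul_dotProduct,
        dotProduct_add, dotProduct_add, dotProduct_smul,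
        dotProduct_smul, dotProduct_smul, dotProduct_smul]
      simp only [smul_eq_mul]
      have hc : Xs ⬝ᵥ X = G12 := by rw [dotProduct_comm]
      rw [← hG11, ← hG12, ← hG22, hc]
      linear_combination G22 * hΔ0
    have hv0 := dotProduct_self_eq_zero.1 hv
    have := (hindep _ _ hv0).1
    exact hG22ne this
  set Δ := G11 * G22 - G12^2 with hΔdef
  -- projection
  set af : (Fin n → ℝ) → ℝ := fun v => ((v ⬝ᵥ X) * G22 - (v ⬝ᵥ Xs) * G12) / Δ with haf
  set bf : (Fin n → ℝ) → ℝ := fun v => (G11 * (v ⬝ᵥ Xs) - G12 * (v ⬝ᵥ X)) / Δ with hbf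
  set π : (Fin n → ℝ) → (Fin n → ℝ) := fun v => v - af v • X - bf v • Xs with hπ
  have hπX : ∀ v, (π v) ⬝ᵥ X = 0 := by
    intro v
    rw [hπ]
    simp only
    rw [sub_dotProduct, sub_dotProduct, smul_dotProduct,
      smul_dotProduct]
    simp only [smul_eq_mul]
    have hc : Xs ⬝ᵥ X = G12 := by rw [dotProduct_comm]
    rw [← hG11, hc, haf, hbf]
    field_simp
    try ring
  have hπXs : ∀ v, (π v) ⬝ᵥ Xs = 0 := by
    intro v
    rw [hπ]
    simp only
    rw [sub_dotProduct, sub_dotProduct, smul_dotProduct,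
      smul_dotProduct]
    simp only [smul_eq_mul]
    rw [← hG12, ← hG22, haf, hbf]
    field_simp
    try ring
  have hπl₀ : π l₀ = l₀ := by
    rw [hπ]
    simp only
    rw [haf, hbf]
    simp only [hl₀X, hl₀Xs]
    simp
  -- continuity
  have hcontdot : ∀ v : Fin n → ℝ, Continuous fun w : Fin n → ℝ => w ⬝ᵥ v :=
    fun v => continuous_id.dotProduct continuous_const
  have hπcont : Continuous π := by
    rw [hπ]
    apply Continuous.sub
    apply Continuous.sub
    · exact continuous_id
    · exact Continuous.smul (f := af) (by
        rw [haf]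
        exact (((hcontdot X).mul continuous_const).sub
          ((hcontdot Xs).mul continuous_const)).div_const _) continuous_const
    · exact Continuous.smul (f := bf) (by
        rw [hbf]
        exact ((continuous_const.mul (hcontdot Xs)).sub
          (continuous_const.mul (hcontdot X))).div_const _) continuous_const
  have hfc : Continuous fun w => (π w) ⬝ᵥ A⁻¹.mulVec (π w) :=
    hπcont.dotProduct (continuous_const.matrix_mulVec hπcont)
  have hOopen : IsOpen {w : Fin n → ℝ | (π w) ⬝ᵥ A⁻¹.mulVec (π w) ≠ 0} :=
    isOpen_compl_singleton.preimage hfc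
  have hl₀O : l₀ ∈ {w : Fin n → ℝ | (π w) ⬝ᵥ A⁻¹.mulVec (π w) ≠ 0} := by
    simp only [Set.mem_setOf_eq, hπl₀]
    exact hQsl₀
  obtain ⟨w₀, hw₀⟩ := rat_point_open hOopen hl₀O
  -- rational projection
  set Δq : ℚ := (x ⬝ᵥ x) * (xs ⬝ᵥ xs) - (x ⬝ᵥ xs)^2 with hΔq
  set aq : ℚ := ((w₀ ⬝ᵥ x) * (xs ⬝ᵥ xs) - (w₀ ⬝ᵥ xs) * (x ⬝ᵥ xs)) / Δq with haq
  set bq : ℚ := ((x ⬝ᵥ x) * (w₀ ⬝ᵥ xs) - (x ⬝ᵥ xs) * (w₀ ⬝ᵥ x)) / Δq with hbq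
  set l : Fin n → ℚ := w₀ - aq • x - bq • xs with hl
  have hΔcast : (Δq : ℝ) = Δ := by
    rw [hΔq, hΔdef, hG11, hG22, hG12, hX, hXs]
    push_cast
    rw [cv_dot, cv_dot, cv_dot]
    try push_cast
    try ring
  have hW₀ : cv w₀ = fun i => ((w₀ i : ℝ)) := rfl
  have hacast : (aq : ℝ) = af (cv w₀) := by
    rw [haq, haf]
    simp only
    rw [← hΔcast, hG22, hG12, hX, hXs]
    push_cast
    rw [cv_dot, cv_dot, cv_dot, cv_dot]
    try push_cast
    try ring
  have hbcast : (bq : ℝ) = bf (cv w₀) := by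
    rw [hbq, hbf]
    simp only
    rw [← hΔcast, hG11, hG12, hX, hXs]
    push_cast
    rw [cv_dot, cv_dot, cv_dot, cv_dot]
    try push_cast
    try ring
  have hlcast : cv l = π (cv w₀) := by
    rw [hl, hπ]
    simp only
    rw [cv_sub, cv_sub, cv_smul, cv_smul, hacast, hbcast, ← hX, ← hXs]
  have hw₀' : (π (cv w₀)) ⬝ᵥ A⁻¹.mulVec (π (cv w₀)) ≠ 0 := hw₀
  have hlQs : (cv l) ⬝ᵥ A⁻¹.mulVec (cv l) ≠ 0 := by rw [hlcast]; exact hw₀'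
  have hlX : (cv l) ⬝ᵥ X = 0 := by rw [hlcast]; exact hπX _
  have hlXs : (cv l) ⬝ᵥ Xs = 0 := by rw [hlcast]; exact hπXs _
  have hlne : l ≠ 0 := by
    intro h
    apply hlQs
    rw [h, cv_zero, zero_dotProduct]
  -- indefiniteness witnesses
  have hkerspan : ∀ s t : ℝ, (cv l) ⬝ᵥ (s • X + t • Xs) = 0 := by
    intro s t
    rw [dotProduct_add, dotProduct_smul, dotProduct_smul, hlX, hlXs]
    simp
  have hwitness : (∃ v : Fin n → ℝ, (cv l) ⬝ᵥ v = 0 ∧ 0 < v ⬝ᵥ A.mulVec v) ∧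
      (∃ v : Fin n → ℝ, (cv l) ⬝ᵥ v = 0 ∧ v ⬝ᵥ A.mulVec v < 0) := by
    have hXk : (cv l) ⬝ᵥ X = 0 := hlX
    have hXsk : (cv l) ⬝ᵥ Xs = 0 := hlXs
    by_cases hg : g12 = 0
    · have h1 : g11 * g22 < 0 := by nlinarith [hd]
      by_cases h11 : 0 < g11
      · have h22 : g22 < 0 := by nlinarith
        exact ⟨⟨X, by simpa using hkerspan 1 0, h11⟩,
          ⟨Xs, by simpa using hkerspan 0 1, h22⟩⟩
      · have h11' : g11 < 0 := by
          rcases lt_trichotomy g11 0 with h | h | h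
          · exact h
          · exfalso; rw [h] at h1; simp at h1
          · exact absurd h h11
        have h22 : 0 < g22 := by nlinarith
        exact ⟨⟨Xs, by simpa using hkerspan 0 1, h22⟩,
          ⟨X, by simpa using hkerspan 1 0, h11'⟩⟩
    · have hg22ne : g22 ≠ 0 := hqs
      set s0 : ℝ := -g22 / g12 with hs0
      set v := s0 • X + (1:ℝ) • Xs with hv
      have hQv : v ⬝ᵥ A.mulVec v = s0 * s0 * g11 + 2 * (s0 * g12) + g22 := by
        rw [hv, expandQ_smul A s0 1 X Xs, symmBf A hA Xs X]
        rw [← hg11, ← hg12, ← hg22]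
        ring
      have hs0ne : s0 ≠ 0 := by
        rw [hs0]
        exact div_ne_zero (neg_ne_zero.2 hg22ne) hg
      have hkey : g22 * (v ⬝ᵥ A.mulVec v) = -(g12^2 - g11*g22) * s0^2 := by
        rw [hQv, hs0]
        field_simp
        ring
      have hprod : g22 * (v ⬝ᵥ A.mulVec v) < 0 := by
        rw [hkey]
        have : s0^2 > 0 := by positivity
        nlinarith [hd, this]
      rcases lt_or_gt_of_ne hg22ne with h22 | h22
      · exact ⟨⟨v, hkerspan s0 1, by nlinarith [hprod]⟩,
          ⟨Xs, by have := hkerspan 0 1; simpa using this, by rw [← hg22]; exact h22⟩⟩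
      · exact ⟨⟨Xs, by have := hkerspan 0 1; simpa using this, by rw [← hg22]; exact h22⟩,
          ⟨v, hkerspan s0 1, by nlinarith [hprod]⟩⟩
  exact ⟨l, hlX, hlXs, hlQs, hlne, hwitness.1, hwitness.2⟩



lemma expandQ (A : Matrix (Fin n) (Fin n) ℝ) (hA : Aᵀ = A) (x y : Fin n → ℝ) :
    (x + y) ⬝ᵥ A.mulVec (x + y)
      = x ⬝ᵥ A.mulVec x + 2 * (x ⬝ᵥ A.mulVec y) + y ⬝ᵥ A.mulVec y := by
  rw [Matrix.mulVec_add, dotProduct_add, add_dotProduct,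
    add_dotProduct, symmBf A hA y x]
  ring

lemma cv_add (v w : Fin n → ℚ) : cv (v + w) = cv v + cv w := by
  funext i; simp [cv]

lemma nondeg_restrict (A : Matrix (Fin n) (Fin n) ℝ) (hA : Aᵀ = A) (hdet : A.det ≠ 0)
    (l : Fin n → ℝ) (hQs : l ⬝ᵥ A⁻¹.mulVec l ≠ 0) :
    ∀ x : Fin n → ℝ, l ⬝ᵥ x = 0 →
      (∀ y : Fin n → ℝ, l ⬝ᵥ y = 0 → x ⬝ᵥ A.mulVec y = 0) → x = 0 := by
  intro x hlx hrad
  have hl : l ≠ 0 := by rintro rfl; simp at hQs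
  obtain ⟨j, hj⟩ : ∃ j, l j ≠ 0 := by
    by_contra h; push_neg at h; exact hl (funext h)
  set t : ℝ := A.mulVec x j / l j with ht
  have hAx : A.mulVec x = t • l := by
    funext i
    have hy : l ⬝ᵥ (l j • (Pi.single i 1 : Fin n → ℝ) - l i • (Pi.single j 1 : Fin n → ℝ)) = 0 := by
      rw [dotProduct_sub, dotProduct_smul, dotProduct_smul,
        dotProduct_single, dotProduct_single]
      simp only [smul_eq_mul, mul_one]
      ring
    have h0 := hrad _ hy
    rw [symmBf A hA] at h0
    rw [sub_dotProduct, smul_dotProduct, smul_dotProduct,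
      single_dotProduct, single_dotProduct] at h0
    simp only [smul_eq_mul, one_mul] at h0
    have hkey : l j * A.mulVec x i = l i * A.mulVec x j := by linarith [h0]
    have : (t • l) i = t * l i := rfl
    rw [this, ht]
    field_simp
    linarith [hkey]
  have hx' : x = t • A⁻¹.mulVec l := by
    have h1 := congrArg (A⁻¹.mulVec ·) hAx
    simp only [Matrix.mulVec_mulVec, Matrix.mulVec_smul] at h1
    rw [Matrix.nonsing_inv_mul A (isUnit_iff_ne_zero.2 hdet), Matrix.one_mulVec] at h1
    exact h1
  have ht0 : t = 0 := by
    have h2 : l ⬝ᵥ x = t * (l ⬝ᵥ A⁻¹.mulVec l) := by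
      rw [hx', dotProduct_smul, smul_eq_mul]
    rw [hlx] at h2
    rcases mul_eq_zero.1 h2.symm with h | h
    · exact h
    · exact absurd h hQs
  rw [hx', ht0, zero_smul]


lemma poly_key (p : MvPolynomial (Fin n) ℚ) (y : Fin n → ℚ) (t : ℝ) :
    MvPolynomial.aeval (t • fun i => ((y i : ℝ))) p
      = Polynomial.eval t
          ((MvPolynomial.aeval (fun i => Polynomial.C (y i) * Polynomial.X) p :
            Polynomial ℚ).map (algebraMap ℚ ℝ)) := by
  rw [Polynomial.eval_map, ← Polynomial.aeval_def]
  have h1 := MvPolynomial.comp_aeval_apply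
    (f := fun i : Fin n => Polynomial.C (y i) * Polynomial.X) (Polynomial.aeval t) p
  rw [h1]
  have h2 : (t • fun i => ((y i : ℝ))) = fun i => (Polynomial.aeval t) (Polynomial.C (y i) * Polynomial.X) := by
    funext i
    simp only [Pi.smul_apply, smul_eq_mul, _root_.map_mul, Polynomial.aeval_C, Polynomial.aeval_X]
    rw [show (algebraMap ℚ ℝ) (y i) = ((y i : ℝ)) from eq_ratCast _ _]
    ring
  rw [h2]

lemma extract_coeffs (aa bb dd c : ℝ) (p : MvPolynomial (Fin n) ℚ) (y : Fin n → ℚ)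
    (h : ∀ t : ℝ, aa * t^2 + bb * t + dd
        = c * MvPolynomial.aeval (t • fun i => ((y i : ℝ))) p) :
    (∃ q : ℚ, aa = c * q) ∧ (∃ q : ℚ, bb = c * q) := by
  set Pq : Polynomial ℚ :=
    MvPolynomial.aeval (fun i => Polynomial.C (y i) * Polynomial.X) p with hPq
  have h' : ∀ t : ℝ,
      Polynomial.eval t (Polynomial.C aa * Polynomial.X ^ 2 + Polynomial.C bb * Polynomial.X
        + Polynomial.C dd)
      = Polynomial.eval t (Polynomial.C c * Pq.map (algebraMap ℚ ℝ)) := by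
    intro t
    rw [Polynomial.eval_mul, Polynomial.eval_C, ← poly_key p y t]
    simpa using h t
  have heq := Polynomial.funext h'
  have c2 := congrArg (fun P => Polynomial.coeff P 2) heq
  have c1 := congrArg (fun P => Polynomial.coeff P 1) heq
  simp only [Polynomial.coeff_add, Polynomial.coeff_C_mul, Polynomial.coeff_X_pow,
    Polynomial.coeff_C, Polynomial.coeff_map, Polynomial.coeff_X] at c2 c1
  norm_num at c2 c1
  constructor
  · exact ⟨Pq.coeff 2, by exact_mod_cast c2⟩
  · exact ⟨Pq.coeff 1, by exact_mod_cast c1⟩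


lemma rat_vec_scaled (q : Fin n → ℚ) :
    ∃ (c : ℝ) (z : Fin n → ℤ), (fun i => (q i : ℝ)) = c • fun i => (z i : ℝ) := by
  classical
  refine ⟨((∏ j, ((q j).den : ℤ) : ℤ) : ℝ)⁻¹,
    fun i => (q i).num * ∏ j ∈ Finset.univ.erase i, ((q j).den : ℤ), ?_⟩
  funext i
  simp only [Pi.smul_apply, smul_eq_mul]
  have hden : ∀ j, (((q j).den : ℤ) : ℝ) ≠ 0 := by
    intro j
    exact_mod_cast Nat.cast_ne_zero.2 (q j).den_nz
  have hprodne : ((∏ j, ((q j).den : ℤ) : ℤ) : ℝ) ≠ 0 := by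
    rw [Int.cast_prod]
    exact Finset.prod_ne_zero_iff.2 fun j _ => hden j
  have hsplit : (∏ j, ((q j).den : ℤ)) = ((q i).den : ℤ) * ∏ j ∈ Finset.univ.erase i, ((q j).den : ℤ) :=
    (Finset.mul_prod_erase _ _ (Finset.mem_univ i)).symm
  rw [Rat.cast_def]
  have hd1 : ((q i).den : ℝ) ≠ 0 := by exact_mod_cast (q i).den_nz
  have hd2 : (∏ j ∈ Finset.univ.erase i, ((q j).den : ℝ)) ≠ 0 :=
    Finset.prod_ne_zero_iff.2 fun j _ => by exact_mod_cast (q j).den_nz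
  have hsplit' : (∏ x : Fin n, ((q x).den : ℝ))
      = ((q i).den : ℝ) * ∏ j ∈ Finset.univ.erase i, ((q j).den : ℝ) := by
    exact_mod_cast congrArg (fun z : ℤ => (z : ℝ)) hsplit
  push_cast
  rw [hsplit']
  field_simp

lemma cv_single (i : Fin n) : cv (Pi.single i 1) = Pi.single i (1:ℝ) := by
  funext k
  simp [cv, Pi.single_apply]
  split <;> simp

lemma cv_mulVec (B : Matrix (Fin n) (Fin n) ℚ) (v : Fin n → ℚ) :
    (B.map ((↑) : ℚ → ℝ)).mulVec (cv v) = cv (B.mulVec v) := by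
  funext i
  simp [Matrix.mulVec, dotProduct, cv]

lemma cv_injf {v w : Fin n → ℚ} (h : cv v = cv w) : v = w := by
  funext i
  have := congrFun h i
  simpa [cv] using this


end S15
set_option maxHeartbeats 2000000 in
/-- an indefinite, irrational, nondegenerate inhomogeneous quadratic form
`Q_ξ(x) = Q(x+ξ)` in `n ≥ 3` variables restricts, on some rational hyperplane
`{x | ∑ lᵢ xᵢ = 0}` (`l` rational, nonzero), to an indefinite, irrational,
nondegenerate form. Irrationality of the restriction is expressed as: the restriction
is not a real scalar multiple of a rational polynomial function on the hyperplane. -/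
theorem stmt15 (n : ℕ) (hn : 3 ≤ n) (A : Matrix (Fin n) (Fin n) ℝ) (hA : Aᵀ = A)
    (hdet : A.det ≠ 0)
    (hind : (∃ x : Fin n → ℝ, 0 < x ⬝ᵥ A.mulVec x) ∧ (∃ x : Fin n → ℝ, x ⬝ᵥ A.mulVec x < 0))
    (ξ : Fin n → ℝ)
    (hirr : (¬ ∃ (c : ℝ) (B : Matrix (Fin n) (Fin n) ℚ), c ≠ 0 ∧ A = c • B.map ((↑) : ℚ → ℝ))
        ∨ (¬ ∃ (c : ℝ) (z : Fin n → ℤ), ξ = c • fun i => (z i : ℝ))) :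
    ∃ l : Fin n → ℚ, l ≠ 0 ∧
      (∃ x : Fin n → ℝ, (∑ i, (l i : ℝ) * x i) = 0 ∧ 0 < x ⬝ᵥ A.mulVec x) ∧
      (∃ x : Fin n → ℝ, (∑ i, (l i : ℝ) * x i) = 0 ∧ x ⬝ᵥ A.mulVec x < 0) ∧
      (∀ x : Fin n → ℝ, (∑ i, (l i : ℝ) * x i) = 0 →
        (∀ y : Fin n → ℝ, (∑ i, (l i : ℝ) * y i) = 0 → x ⬝ᵥ A.mulVec y = 0) → x = 0) ∧
      ¬ ∃ (c : ℝ) (p : MvPolynomial (Fin n) ℚ), c ≠ 0 ∧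
          ∀ x : Fin n → ℝ, (∑ i, (l i : ℝ) * x i) = 0 →
            (x + ξ) ⬝ᵥ A.mulVec (x + ξ) = c * MvPolynomial.aeval x p := by
  classical
  have hQcont : Continuous fun v : Fin n → ℝ => v ⬝ᵥ A.mulVec v :=
    continuous_id.dotProduct (continuous_const.matrix_mulVec continuous_id)
  obtain ⟨wp, hwp⟩ := hind.1
  obtain ⟨wn, hwn⟩ := hind.2
  obtain ⟨xs, hxs⟩ := S15.rat_point_open
    (isOpen_lt continuous_const hQcont) (show wp ∈ {v : Fin n → ℝ | 0 < v ⬝ᵥ A.mulVec v} from hwp)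
  have hqs : 0 < S15.cv xs ⬝ᵥ A.mulVec (S15.cv xs) := hxs
  set c := S15.cv xs ⬝ᵥ A.mulVec (S15.cv xs) with hcdef
  have hcne : c ≠ 0 := ne_of_gt hqs
  have hdisccont : Continuous fun v : Fin n → ℝ =>
      (v ⬝ᵥ A.mulVec (S15.cv xs))^2 - (v ⬝ᵥ A.mulVec v) * c := by
    apply Continuous.sub
    · exact (continuous_id.dotProduct
        (continuous_const.matrix_mulVec continuous_const)).pow 2
    · exact hQcont.mul continuous_const
  have hDopen : IsOpen {v : Fin n → ℝ |
      0 < (v ⬝ᵥ A.mulVec (S15.cv xs))^2 - (v ⬝ᵥ A.mulVec v) * c} :=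
    isOpen_lt continuous_const hdisccont
  obtain ⟨x₀, hx₀⟩ := S15.rat_point_open
    (isOpen_lt hQcont continuous_const) (show wn ∈ {v : Fin n → ℝ | v ⬝ᵥ A.mulVec v < 0} from hwn)
  have hx₀Q : S15.cv x₀ ⬝ᵥ A.mulVec (S15.cv x₀) < 0 := hx₀
  have hx₀D : S15.cv x₀ ∈ {v : Fin n → ℝ |
      0 < (v ⬝ᵥ A.mulVec (S15.cv xs))^2 - (v ⬝ᵥ A.mulVec v) * c} := by
    have h2 : 0 < c := hqs
    simp only [Set.mem_setOf_eq]
    nlinarith [sq_nonneg (S15.cv x₀ ⬝ᵥ A.mulVec (S15.cv xs))]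
  obtain ⟨r, hr0, hball⟩ := Metric.isOpen_iff.1 hDopen _ hx₀D
  obtain ⟨ε, hε0, hεr⟩ := exists_rat_btwn hr0
  have hεQ : 0 < ε := by exact_mod_cast hε0
  have hεne : (ε : ℝ) ≠ 0 := ne_of_gt hε0
  have hεQne : ε ≠ 0 := ne_of_gt hεQ
  have hmem : ∀ u : Fin n → ℚ, (∀ i, |(u i : ℝ)| ≤ 1) →
      0 < (S15.cv (x₀ + ε • u) ⬝ᵥ A.mulVec (S15.cv xs))^2
        - (S15.cv (x₀ + ε • u) ⬝ᵥ A.mulVec (S15.cv (x₀ + ε • u))) * c := by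
    intro u hu
    have hb : S15.cv (x₀ + ε • u) ∈ Metric.ball (S15.cv x₀) r := by
      rw [Metric.mem_ball, dist_pi_lt_iff hr0]
      intro i
      rw [Real.dist_eq]
      have he : (S15.cv (x₀ + ε • u)) i - (S15.cv x₀) i = (ε:ℝ) * (u i:ℝ) := by
        simp only [S15.cv, Pi.add_apply, Pi.smul_apply, smul_eq_mul]
        push_cast
        ring
      rw [he, abs_mul, abs_of_pos hε0]
      calc (ε:ℝ) * |(u i:ℝ)| ≤ (ε:ℝ) * 1 := by nlinarith [hu i]
      _ < r := by linarith
    exact hball hb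
  by_contra hcon
  have core : ∀ z : Fin n → ℚ,
      0 < (S15.cv z ⬝ᵥ A.mulVec (S15.cv xs))^2 - (S15.cv z ⬝ᵥ A.mulVec (S15.cv z)) * c →
      (∃ q : ℚ, S15.cv z ⬝ᵥ A.mulVec (S15.cv z) = c * q) ∧
      (∃ q : ℚ, S15.cv z ⬝ᵥ A.mulVec ξ = c * q) := by
    intro z hz
    obtain ⟨l, hlz, hlxs, hlQ, hlne, hpos, hneg⟩ :=
      S15.buildL A hA hdet hn xs z hcne (by rw [hcdef] at hz; linarith [hz])
    have hsum : ∀ v : Fin n → ℝ, (∑ i, (l i : ℝ) * v i) = S15.cv l ⬝ᵥ v := fun v => rfl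
    have hndeg := S15.nondeg_restrict A hA hdet (S15.cv l) hlQ
    have hex : ∃ (cc : ℝ) (p : MvPolynomial (Fin n) ℚ), cc ≠ 0 ∧
        ∀ v : Fin n → ℝ, (∑ i, (l i : ℝ) * v i) = 0 →
          (v + ξ) ⬝ᵥ A.mulVec (v + ξ) = cc * MvPolynomial.aeval v p := by
      by_contra hno
      apply hcon
      refine ⟨l, hlne, ?_, ?_, ?_, hno⟩
      · obtain ⟨v, hv1, hv2⟩ := hpos
        exact ⟨v, by rw [hsum]; exact hv1, hv2⟩
      · obtain ⟨v, hv1, hv2⟩ := hneg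
        exact ⟨v, by rw [hsum]; exact hv1, hv2⟩
      · intro x hx hrad
        exact hndeg x (by rw [← hsum]; exact hx) (fun y hy => hrad y (by rw [hsum]; exact hy))
    obtain ⟨cc, p, hccne, heqn⟩ := hex
    have expand : ∀ (Y : Fin n → ℝ) (t : ℝ), (t • Y + ξ) ⬝ᵥ A.mulVec (t • Y + ξ)
        = (Y ⬝ᵥ A.mulVec Y) * t^2 + (2 * (Y ⬝ᵥ A.mulVec ξ)) * t + ξ ⬝ᵥ A.mulVec ξ := by
      intro Y t
      have h1 : t • Y + ξ = t • Y + (1:ℝ) • ξ := by rw [one_smul]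
      rw [h1, S15.expandQ_smul A t 1 Y ξ, S15.symmBf A hA ξ Y]
      ring
    have happly : ∀ (y : Fin n → ℚ), S15.cv l ⬝ᵥ S15.cv y = 0 →
        (∃ q : ℚ, S15.cv y ⬝ᵥ A.mulVec (S15.cv y) = cc * q) ∧
        (∃ q : ℚ, 2 * (S15.cv y ⬝ᵥ A.mulVec ξ) = cc * q) := by
      intro y h0
      have h2 : ∀ t : ℝ, (S15.cv y ⬝ᵥ A.mulVec (S15.cv y)) * t^2
          + (2 * (S15.cv y ⬝ᵥ A.mulVec ξ)) * t + ξ ⬝ᵥ A.mulVec ξ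
          = cc * MvPolynomial.aeval (t • fun i => ((y i : ℝ))) p := by
        intro t
        rw [← expand (S15.cv y) t]
        apply heqn
        rw [hsum, dotProduct_smul, h0, smul_zero]
      exact S15.extract_coeffs _ _ _ cc p y h2
    obtain ⟨⟨qs0, hqs0⟩, -⟩ := happly xs hlxs
    obtain ⟨⟨qz0, hqz0⟩, ⟨qz1, hqz1⟩⟩ := happly z hlz
    have hqs0ne : (qs0:ℝ) ≠ 0 := by
      intro h
      apply hcne
      rw [hcdef, hqs0, h, mul_zero]
    have hccval : cc = c / (qs0:ℝ) := by
      rw [hcdef, hqs0]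
      field_simp
    refine ⟨⟨qz0 / qs0, ?_⟩, ⟨qz1 / (2*qs0), ?_⟩⟩
    · rw [hqz0, hccval]
      push_cast
      ring
    · have h3 : S15.cv z ⬝ᵥ A.mulVec ξ = cc * qz1 / 2 := by linarith [hqz1]
      rw [h3, hccval]
      push_cast
      ring
  -- test vectors
  set e : Fin n → (Fin n → ℚ) := fun i => Pi.single i 1 with he
  have hval : ∀ (i k : Fin n), e i k = 0 ∨ e i k = 1 := by
    intro i k
    rcases eq_or_ne k i with h | h <;> simp [he, Pi.single_apply, h]
  have habs_single : ∀ (i k : Fin n), |((e i k : ℚ) : ℝ)| ≤ 1 := by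
    intro i k
    rcases hval i k with h | h <;> rw [h] <;>
      (push_cast; rw [abs_le]; constructor <;> norm_num)
  have habs_halfsingle : ∀ (i k : Fin n), |((((1/2 : ℚ) • e i) k : ℚ) : ℝ)| ≤ 1 := by
    intro i k
    simp only [Pi.smul_apply, smul_eq_mul]
    rcases hval i k with h | h <;> rw [h] <;>
      (push_cast; rw [abs_le]; constructor <;> norm_num)
  have habs_half : ∀ (i j k : Fin n), |((((1/2 : ℚ) • (e i + e j)) k : ℚ) : ℝ)| ≤ 1 := by
    intro i j k
    simp only [Pi.smul_apply, Pi.add_apply, smul_eq_mul]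
    rcases hval i k with h1 | h1 <;> rcases hval j k with h2 | h2 <;> rw [h1, h2] <;>
      (push_cast; rw [abs_le]; constructor <;> norm_num)
  have hcore0 := core x₀ hx₀D
  have hcoreF := fun i => core (x₀ + ε • e i) (hmem (e i) (fun k => habs_single i k))
  have hcoreH := fun i => core (x₀ + ε • ((1/2:ℚ) • e i)) (hmem _ (fun k => habs_halfsingle i k))
  have hcoreP := fun i j => core (x₀ + ε • ((1/2:ℚ) • (e i + e j)))
    (hmem _ (fun k => habs_half i j k))
  have hsc : ∀ (s : ℚ) (w : Fin n → ℚ),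
      S15.cv (s • w) ⬝ᵥ A.mulVec (S15.cv (s • w))
        = (s:ℝ)^2 * (S15.cv w ⬝ᵥ A.mulVec (S15.cv w)) := by
    intro s w
    rw [S15.cv_smul, smul_dotProduct, Matrix.mulVec_smul, dotProduct_smul]
    simp only [smul_eq_mul]
    ring
  have hsum1 : ∀ i j : Fin n, (x₀ + ε • e i) + (x₀ + ε • e j)
      = (2:ℚ) • (x₀ + ε • ((1/2:ℚ) • (e i + e j))) := by
    intro i j
    funext k
    simp only [Pi.add_apply, Pi.smul_apply, smul_eq_mul]
    ring
  have hsum2 : ∀ i : Fin n, (x₀ + ε • e i) + x₀ = (2:ℚ) • (x₀ + ε • ((1/2:ℚ) • e i)) := by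
    intro i
    funext k
    simp only [Pi.add_apply, Pi.smul_apply, smul_eq_mul]
    ring
  have hpair : ∀ u v : Fin n → ℚ,
      (∃ q:ℚ, S15.cv u ⬝ᵥ A.mulVec (S15.cv u) = c*q) →
      (∃ q:ℚ, S15.cv v ⬝ᵥ A.mulVec (S15.cv v) = c*q) →
      (∃ q:ℚ, S15.cv (u+v) ⬝ᵥ A.mulVec (S15.cv (u+v)) = c*q) →
      ∃ q:ℚ, S15.cv u ⬝ᵥ A.mulVec (S15.cv v) = c*q := by
    rintro u v ⟨qu, hu⟩ ⟨qv, hv⟩ ⟨qw, hw⟩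
    refine ⟨(qw - qu - qv)/2, ?_⟩
    rw [S15.cv_add, S15.expandQ A hA, hu, hv] at hw
    push_cast
    linarith [hw]
  have hBff : ∀ i j, ∃ q:ℚ,
      S15.cv (x₀ + ε • e i) ⬝ᵥ A.mulVec (S15.cv (x₀ + ε • e j)) = c*q := by
    intro i j
    apply hpair _ _ (hcoreF i).1 (hcoreF j).1
    obtain ⟨q, hq⟩ := (hcoreP i j).1
    refine ⟨4*q, ?_⟩
    rw [hsum1 i j, hsc 2 _, hq]
    push_cast
    ring
  have hBfx : ∀ i, ∃ q:ℚ,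
      S15.cv (x₀ + ε • e i) ⬝ᵥ A.mulVec (S15.cv x₀) = c*q := by
    intro i
    apply hpair _ _ (hcoreF i).1 hcore0.1
    obtain ⟨q, hq⟩ := (hcoreH i).1
    refine ⟨4*q, ?_⟩
    rw [hsum2 i, hsc 2 _, hq]
    push_cast
    ring
  have hsingle : ∀ i, Pi.single i (1:ℝ)
      = (ε:ℝ)⁻¹ • (S15.cv (x₀ + ε • e i) - S15.cv x₀) := by
    intro i
    rw [← S15.cv_sub]
    have h1 : (x₀ + ε • e i) - x₀ = ε • e i := add_sub_cancel_left x₀ (ε • e i)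
    rw [h1, S15.cv_smul, he]
    rw [S15.cv_single]
    rw [smul_smul, inv_mul_cancel₀ hεne, one_smul]
  have hAij : ∀ i j, ∃ q : ℚ, A i j = c * q := by
    intro i j
    obtain ⟨qa, ha⟩ := hBff i j
    obtain ⟨qb, hb⟩ := hBfx i
    obtain ⟨qb', hb'⟩ := hBfx j
    obtain ⟨qd, hd0⟩ := hcore0.1
    refine ⟨(ε:ℚ)⁻¹ * (ε:ℚ)⁻¹ * (qa - qb - qb' + qd), ?_⟩
    have h1 : A i j = (Pi.single i (1:ℝ)) ⬝ᵥ A.mulVec (Pi.single j (1:ℝ)) := by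
      rw [Matrix.mulVec_single, single_dotProduct]
      simp
    have h2 : (Pi.single i (1:ℝ)) ⬝ᵥ A.mulVec (Pi.single j (1:ℝ))
        = (ε:ℝ)⁻¹ * (ε:ℝ)⁻¹ *
          ((S15.cv (x₀ + ε • e i) ⬝ᵥ A.mulVec (S15.cv (x₀ + ε • e j)))
            - (S15.cv (x₀ + ε • e i) ⬝ᵥ A.mulVec (S15.cv x₀))
            - (S15.cv (x₀ + ε • e j) ⬝ᵥ A.mulVec (S15.cv x₀))
            + (S15.cv x₀ ⬝ᵥ A.mulVec (S15.cv x₀))) := by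
      rw [hsingle i, hsingle j]
      rw [smul_dotProduct, Matrix.mulVec_smul, dotProduct_smul,
        sub_dotProduct, Matrix.mulVec_sub, dotProduct_sub, dotProduct_sub,
        S15.symmBf A hA (S15.cv x₀) (S15.cv (x₀ + ε • e j))]
      simp only [smul_eq_mul]
      ring
    rw [h1, h2, ha, hb, hb', hd0]
    push_cast
    ring
  have hAxi : ∀ i, ∃ q : ℚ, (A.mulVec ξ) i = c * q := by
    intro i
    obtain ⟨qa, ha⟩ := (hcoreF i).2
    obtain ⟨qb, hb⟩ := hcore0.2
    refine ⟨(ε:ℚ)⁻¹ * (qa - qb), ?_⟩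
    have h1 : (A.mulVec ξ) i = (Pi.single i (1:ℝ)) ⬝ᵥ (A.mulVec ξ) := by
      rw [single_dotProduct, one_mul]
    rw [h1, hsingle i, smul_dotProduct, sub_dotProduct]
    simp only [smul_eq_mul]
    rw [ha, hb]
    push_cast
    ring
  choose ρ hρ using hAij
  choose tv htv using hAxi
  have hAmat : A = c • (Matrix.of ρ).map ((↑) : ℚ → ℝ) := by
    ext i j
    simp only [Matrix.smul_apply, Matrix.map_apply, Matrix.of_apply, smul_eq_mul]
    exact hρ i j
  rcases hirr with h1 | h2
  · exact h1 ⟨c, Matrix.of ρ, hcne, hAmat⟩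
  · have hdetρ : (Matrix.of ρ).det ≠ 0 := by
      intro h0
      apply hdet
      rw [hAmat, Matrix.det_smul]
      have hmapdet : ((Matrix.of ρ).map ((↑) : ℚ → ℝ)).det = (((Matrix.of ρ).det : ℚ) : ℝ) :=
        (RingHom.map_det (Rat.castHom ℝ) (Matrix.of ρ)).symm
      rw [hmapdet, h0]
      simp
    have hAξv : A.mulVec ξ = c • S15.cv tv := by
      funext i
      simp only [Pi.smul_apply, smul_eq_mul, S15.cv]
      exact htv i
    have hq : (Matrix.of ρ).mulVec ((Matrix.of ρ)⁻¹.mulVec tv) = tv := by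
      rw [Matrix.mulVec_mulVec, Matrix.mul_nonsing_inv _ (isUnit_iff_ne_zero.2 hdetρ),
        Matrix.one_mulVec]
    have hmul2 : A.mulVec (S15.cv ((Matrix.of ρ)⁻¹.mulVec tv)) = A.mulVec ξ := by
      conv_lhs => rw [hAmat]
      rw [Matrix.smul_mulVec, S15.cv_mulVec, hq, hAξv]
    have hout : S15.cv ((Matrix.of ρ)⁻¹.mulVec tv) = ξ := by
      have h3 := congrArg (Matrix.mulVec A⁻¹) hmul2
      rwa [Matrix.mulVec_mulVec, Matrix.mulVec_mulVec,
        Matrix.nonsing_inv_mul _ (isUnit_iff_ne_zero.2 hdet),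
        Matrix.one_mulVec, Matrix.one_mulVec] at h3
    obtain ⟨cr, zv, hzv⟩ := S15.rat_vec_scaled ((Matrix.of ρ)⁻¹.mulVec tv)
    exact h2 ⟨cr, zv, by rw [← hout]; exact hzv⟩
end

section
/- Let Q_ξ(x) = Q(x+ξ) be an inhomogeneous, nondegenerate, indefinite quadratic form on R^3 and L a linear form such that the plane {L = 0} is tangent to the cone {Q = 0}. Then there exist λ, μ ∈ R\{0}, α ∈ R, and (g,v) ∈ SL(3,R) ⋉ R^3 such that λQ_ξ((g,v)·x) = Q_0(x + (0,0,α)) and μL((g,v)·x) = x_3 for all x, where Q_0(x) = 2x_1x_3 - x_2^2. Moreover {(Q_ξ(x), L(x)) : x ∈ R^3} is dense in R^2. -/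
open Matrix

namespace Stmt16Aux
noncomputable section

lemma dmv (A : Matrix (Fin 3) (Fin 3) ℝ) (u w : Fin 3 → ℝ) :
    u ⬝ᵥ A *ᵥ w = u 0 * (A 0 0 * w 0 + A 0 1 * w 1 + A 0 2 * w 2)
      + u 1 * (A 1 0 * w 0 + A 1 1 * w 1 + A 1 2 * w 2)
      + u 2 * (A 2 0 * w 0 + A 2 1 * w 1 + A 2 2 * w 2) := by
  simp [dotProduct, Matrix.mulVec, Fin.sum_univ_three]

lemma entry_symm {A : Matrix (Fin 3) (Fin 3) ℝ} (hA : Aᵀ = A) (i j : Fin 3) :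
    A i j = A j i := by
  conv_lhs => rw [← hA]
  simp

lemma bsym {A : Matrix (Fin 3) (Fin 3) ℝ} (hA : Aᵀ = A) (u w : Fin 3 → ℝ) :
    u ⬝ᵥ A *ᵥ w = w ⬝ᵥ A *ᵥ u := by
  rw [dmv, dmv, entry_symm hA 1 0, entry_symm hA 2 0, entry_symm hA 2 1]
  ring

lemma bflip {A : Matrix (Fin 3) (Fin 3) ℝ} (hA : Aᵀ = A) (u w : Fin 3 → ℝ) :
    u ⬝ᵥ A *ᵥ w = (A *ᵥ u) ⬝ᵥ w := by
  rw [dmv]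
  simp only [dotProduct, Matrix.mulVec, Fin.sum_univ_three]
  rw [entry_symm hA 1 0, entry_symm hA 2 0, entry_symm hA 2 1]
  ring

lemma bsmul (A : Matrix (Fin 3) (Fin 3) ℝ) (r : ℝ) (u w : Fin 3 → ℝ) :
    u ⬝ᵥ A *ᵥ (r • w) = r * (u ⬝ᵥ A *ᵥ w) := by
  simp only [dmv, Pi.smul_apply, smul_eq_mul]; ring

lemma bsmul2 (A : Matrix (Fin 3) (Fin 3) ℝ) (r : ℝ) (u : Fin 3 → ℝ) :
    (r • u) ⬝ᵥ A *ᵥ (r • u) = r ^ 2 * (u ⬝ᵥ A *ᵥ u) := by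
  simp only [dmv, Pi.smul_apply, smul_eq_mul]; ring

lemma badd (A : Matrix (Fin 3) (Fin 3) ℝ) (r : ℝ) (u y z : Fin 3 → ℝ) :
    u ⬝ᵥ A *ᵥ (y + r • z) = u ⬝ᵥ A *ᵥ y + r * (u ⬝ᵥ A *ᵥ z) := by
  simp only [dmv, Pi.smul_apply, Pi.add_apply, smul_eq_mul]; ring

lemma bcomb2 {A : Matrix (Fin 3) (Fin 3) ℝ} (hA : Aᵀ = A) (s : ℝ) (u v : Fin 3 → ℝ) :
    (u + s • v) ⬝ᵥ A *ᵥ (u + s • v)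
      = u ⬝ᵥ A *ᵥ u + 2 * s * (u ⬝ᵥ A *ᵥ v) + s ^ 2 * (v ⬝ᵥ A *ᵥ v) := by
  simp only [dmv, Pi.smul_apply, Pi.add_apply, smul_eq_mul]
  rw [entry_symm hA 1 0, entry_symm hA 2 0, entry_symm hA 2 1]
  ring

lemma bcomb3 {A : Matrix (Fin 3) (Fin 3) ℝ} (hA : Aᵀ = A) (r s t : ℝ) (u v w : Fin 3 → ℝ) :
    (r • u + s • v + t • w) ⬝ᵥ A *ᵥ (r • u + s • v + t • w)
      = r ^ 2 * (u ⬝ᵥ A *ᵥ u) + s ^ 2 * (v ⬝ᵥ A *ᵥ v) + t ^ 2 * (w ⬝ᵥ A *ᵥ w)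
        + 2 * r * s * (u ⬝ᵥ A *ᵥ v) + 2 * r * t * (u ⬝ᵥ A *ᵥ w)
        + 2 * s * t * (v ⬝ᵥ A *ᵥ w) := by
  simp only [dmv, Pi.smul_apply, Pi.add_apply, smul_eq_mul]
  rw [entry_symm hA 1 0, entry_symm hA 2 0, entry_symm hA 2 1]
  ring

lemma bright3 (A : Matrix (Fin 3) (Fin 3) ℝ) (r s t : ℝ) (u x y z : Fin 3 → ℝ) :
    u ⬝ᵥ A *ᵥ (r • x + s • y + t • z)
      = r * (u ⬝ᵥ A *ᵥ x) + s * (u ⬝ᵥ A *ᵥ y) + t * (u ⬝ᵥ A *ᵥ z) := by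
  simp only [dmv, Pi.smul_apply, Pi.add_apply, smul_eq_mul]; ring

lemma bsub (A : Matrix (Fin 3) (Fin 3) ℝ) (r : ℝ) (u y z : Fin 3 → ℝ) :
    u ⬝ᵥ A *ᵥ (y - r • z) = u ⬝ᵥ A *ᵥ y - r * (u ⬝ᵥ A *ᵥ z) := by
  simp only [dmv, Pi.smul_apply, Pi.sub_apply, smul_eq_mul]; ring

lemma dadd (l : Fin 3 → ℝ) (r : ℝ) (y z : Fin 3 → ℝ) :
    l ⬝ᵥ (y + r • z) = l ⬝ᵥ y + r * (l ⬝ᵥ z) := by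
  simp [dotProduct, Fin.sum_univ_three]; ring

lemma dsub (l : Fin 3 → ℝ) (r : ℝ) (y z : Fin 3 → ℝ) :
    l ⬝ᵥ (y - r • z) = l ⬝ᵥ y - r * (l ⬝ᵥ z) := by
  simp [dotProduct, Fin.sum_univ_three]; ring

def cr (a b : Fin 3 → ℝ) : Fin 3 → ℝ :=
  ![a 1 * b 2 - a 2 * b 1, a 2 * b 0 - a 0 * b 2, a 0 * b 1 - a 1 * b 0]

lemma dot_cr_left (a b : Fin 3 → ℝ) : a ⬝ᵥ cr a b = 0 := by
  simp [cr, dotProduct, Fin.sum_univ_three]; ring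

lemma dot_cr_right (a b : Fin 3 → ℝ) : b ⬝ᵥ cr a b = 0 := by
  simp [cr, dotProduct, Fin.sum_univ_three]; ring

lemma cr_eq_zero (a b : Fin 3 → ℝ) (h : cr a b = 0) (j k : Fin 3) :
    b k * a j = b j * a k := by
  have h0 := congrFun h 0
  have h1 := congrFun h 1
  have h2 := congrFun h 2
  simp [cr] at h0 h1 h2
  fin_cases j <;> fin_cases k <;>
    simp only [Fin.mk_zero, Fin.mk_one, Fin.reduceFinMk] <;>
    first
      | ring1
      | linear_combination h0
      | linear_combination -h0
      | linear_combination h1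
      | linear_combination -h1
      | linear_combination h2
      | linear_combination -h2

end
end Stmt16Aux

open Stmt16Aux

/-- if the plane `{L = 0}` is tangent to the cone `{Q = 0}` (they meet in
exactly one line), with `Q` nondegenerate indefinite (symmetric matrix `A`), then the
pair `(Q_ξ, L)` is equivalent under `SL(3,ℝ) ⋉ ℝ³` and scalings to
`((Q₀)_{(0,0,α)}, L₀)` with `Q₀(x) = 2x₁x₃ - x₂²`, `L₀(x) = x₃`; moreover
`{(Q_ξ(x), L(x)) : x ∈ ℝ³}` is dense in `ℝ²`. -/
theorem stmt16 (A : Matrix (Fin 3) (Fin 3) ℝ) (hA : Aᵀ = A) (hdet : A.det ≠ 0)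
    (hind : (∃ x : Fin 3 → ℝ, 0 < x ⬝ᵥ A.mulVec x) ∧ (∃ x : Fin 3 → ℝ, x ⬝ᵥ A.mulVec x < 0))
    (ξ l : Fin 3 → ℝ)
    (htan : ∃ x₀ : Fin 3 → ℝ, x₀ ≠ 0 ∧
      {x : Fin 3 → ℝ | l ⬝ᵥ x = 0 ∧ x ⬝ᵥ A.mulVec x = 0} = {x | ∃ t : ℝ, x = t • x₀}) :
    (∃ (lam mu α : ℝ) (g : Matrix (Fin 3) (Fin 3) ℝ) (v : Fin 3 → ℝ),
      lam ≠ 0 ∧ mu ≠ 0 ∧ g.det = 1 ∧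
      (∀ x : Fin 3 → ℝ,
        lam * ((g.mulVec x + v + ξ) ⬝ᵥ A.mulVec (g.mulVec x + v + ξ))
          = 2 * x 0 * (x 2 + α) - (x 1) ^ 2) ∧
      (∀ x : Fin 3 → ℝ, mu * (l ⬝ᵥ (g.mulVec x + v)) = x 2)) ∧
    Dense (Set.range fun x : Fin 3 → ℝ =>
      (((x + ξ) ⬝ᵥ A.mulVec (x + ξ), l ⬝ᵥ x) : ℝ × ℝ)) := by
  classical
  obtain ⟨x₀, hx0ne, hset⟩ := htan
  obtain ⟨⟨u, hu⟩, ⟨w, hw⟩⟩ := hind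
  have hx0mem : l ⬝ᵥ x₀ = 0 ∧ x₀ ⬝ᵥ A *ᵥ x₀ = 0 := by
    have h : x₀ ∈ {x : Fin 3 → ℝ | ∃ t : ℝ, x = t • x₀} := ⟨1, (one_smul ℝ x₀).symm⟩
    rw [← hset] at h
    exact h
  have hlx0 := hx0mem.1
  have hQx0 := hx0mem.2
  -- A *ᵥ x₀ ≠ 0 in functional form
  have hker : ¬ (∀ y : Fin 3 → ℝ, y ⬝ᵥ A *ᵥ x₀ = 0) := by
    intro hy
    have hAx0 : A *ᵥ x₀ = 0 := by
      funext k
      fin_cases k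
      · simpa [dotProduct, Fin.sum_univ_three] using hy ![1, 0, 0]
      · simpa [dotProduct, Fin.sum_univ_three] using hy ![0, 1, 0]
      · simpa [dotProduct, Fin.sum_univ_three] using hy ![0, 0, 1]
    exact hdet ((Matrix.exists_mulVec_eq_zero_iff).mp ⟨x₀, hx0ne, hAx0⟩)
  -- tangency: everything in the plane is B-orthogonal to x₀
  have hstep1 : ∀ y : Fin 3 → ℝ, l ⬝ᵥ y = 0 → x₀ ⬝ᵥ A *ᵥ y = 0 := by
    intro y hy
    by_contra hB
    rcases eq_or_ne (y ⬝ᵥ A *ᵥ y) 0 with hQ | hQ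
    · have hmem : y ∈ {x : Fin 3 → ℝ | l ⬝ᵥ x = 0 ∧ x ⬝ᵥ A *ᵥ x = 0} := ⟨hy, hQ⟩
      rw [hset] at hmem
      obtain ⟨t, rfl⟩ := hmem
      apply hB
      rw [bsmul, hQx0, mul_zero]
    · set s : ℝ := -(2 * (x₀ ⬝ᵥ A *ᵥ y)) / (y ⬝ᵥ A *ᵥ y) with hs
      have hsne : s ≠ 0 := by
        apply div_ne_zero _ hQ
        simpa using hB
      have hz : (x₀ + s • y) ∈ {x : Fin 3 → ℝ | l ⬝ᵥ x = 0 ∧ x ⬝ᵥ A *ᵥ x = 0} := by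
        constructor
        · rw [dadd, hlx0, hy]; ring
        · have hsQ : s * (y ⬝ᵥ A *ᵥ y) = -(2 * (x₀ ⬝ᵥ A *ᵥ y)) :=
            div_mul_cancel₀ _ hQ
          rw [bcomb2 hA, hQx0]
          linear_combination s * hsQ
      rw [hset] at hz
      obtain ⟨t, ht⟩ := hz
      have h1 : x₀ ⬝ᵥ A *ᵥ (x₀ + s • y) = s * (x₀ ⬝ᵥ A *ᵥ y) := by
        rw [badd, hQx0, zero_add]
      have h2 : x₀ ⬝ᵥ A *ᵥ (x₀ + s • y) = 0 := by
        rw [ht, bsmul, hQx0, mul_zero]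
      rw [h1] at h2
      exact hB ((mul_eq_zero.mp h2).resolve_left hsne)
  have hlne : l ≠ 0 := by
    intro h0
    apply hker
    intro y
    rw [bsym hA]
    exact hstep1 y (by rw [h0, zero_dotProduct])
  obtain ⟨j, hj⟩ : ∃ j, l j ≠ 0 := by
    by_contra hc
    push_neg at hc
    exact hlne (funext hc)
  have hsingle : ∀ (z : Fin 3 → ℝ) (i : Fin 3), z ⬝ᵥ Pi.single i (1 : ℝ) = z i := by
    intro z i
    fin_cases i <;> simp [dotProduct, Fin.sum_univ_three, Pi.single_apply]
  -- the linear form is proportional to B(x₀, ·)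
  set cl : ℝ := (x₀ ⬝ᵥ A *ᵥ Pi.single j 1) / l j with hcldef
  have hcl : ∀ y : Fin 3 → ℝ, x₀ ⬝ᵥ A *ᵥ y = cl * (l ⬝ᵥ y) := by
    intro y
    have hy0 : l ⬝ᵥ (y - ((l ⬝ᵥ y) / l j) • (Pi.single j (1 : ℝ) : Fin 3 → ℝ)) = 0 := by
      rw [dsub, hsingle, div_mul_cancel₀ _ hj, sub_self]
    have h := hstep1 _ hy0
    rw [bsub] at h
    rw [hcldef]
    linear_combination h
  have hclne : cl ≠ 0 := by
    intro h0
    apply hker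
    intro y
    rw [bsym hA, hcl y, h0, zero_mul]
  -- find an isotropic vector e₃ with B(x₀,e₃) ≠ 0
  obtain ⟨e₃, hQe₃, hp⟩ : ∃ e₃ : Fin 3 → ℝ, e₃ ⬝ᵥ A *ᵥ e₃ = 0 ∧ x₀ ⬝ᵥ A *ᵥ e₃ ≠ 0 := by
    set bw : ℝ := w ⬝ᵥ A *ᵥ u with hbw
    set disc : ℝ := bw ^ 2 - (w ⬝ᵥ A *ᵥ w) * (u ⬝ᵥ A *ᵥ u) with hdiscdef
    have hdisc : 0 < disc := by nlinarith [sq_nonneg bw]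
    set d : ℝ := Real.sqrt disc with hddef
    have hd : d ^ 2 = disc := Real.sq_sqrt hdisc.le
    have hdpos : 0 < d := Real.sqrt_pos.mpr hdisc
    set t₁ : ℝ := (-bw + d) / (u ⬝ᵥ A *ᵥ u) with ht₁
    set t₂ : ℝ := (-bw - d) / (u ⬝ᵥ A *ᵥ u) with ht₂
    have hQune : (u ⬝ᵥ A *ᵥ u) ≠ 0 := ne_of_gt hu
    have hd' : d ^ 2 = bw ^ 2 - (w ⬝ᵥ A *ᵥ w) * (u ⬝ᵥ A *ᵥ u) := hd.trans hdiscdef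
    have hroot : ∀ tt : ℝ, tt ^ 2 * (u ⬝ᵥ A *ᵥ u) + 2 * tt * bw + w ⬝ᵥ A *ᵥ w = 0 →
        (w + tt • u) ⬝ᵥ A *ᵥ (w + tt • u) = 0 := by
      intro tt h
      rw [hbw] at h
      rw [bcomb2 hA]
      linear_combination h
    have hT₁ : t₁ * (u ⬝ᵥ A *ᵥ u) = -bw + d := by
      rw [ht₁]; exact div_mul_cancel₀ _ hQune
    have hT₂ : t₂ * (u ⬝ᵥ A *ᵥ u) = -bw - d := by
      rw [ht₂]; exact div_mul_cancel₀ _ hQune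
    have hr₁ : t₁ ^ 2 * (u ⬝ᵥ A *ᵥ u) + 2 * t₁ * bw + w ⬝ᵥ A *ᵥ w = 0 := by
      have hmul : (t₁ ^ 2 * (u ⬝ᵥ A *ᵥ u) + 2 * t₁ * bw + w ⬝ᵥ A *ᵥ w) * (u ⬝ᵥ A *ᵥ u) = 0 := by
        linear_combination (t₁ * (u ⬝ᵥ A *ᵥ u) + (-bw + d) + 2 * bw) * hT₁ + hd'
      exact (mul_eq_zero.mp hmul).resolve_right hQune
    have hr₂ : t₂ ^ 2 * (u ⬝ᵥ A *ᵥ u) + 2 * t₂ * bw + w ⬝ᵥ A *ᵥ w = 0 := by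
      have hmul : (t₂ ^ 2 * (u ⬝ᵥ A *ᵥ u) + 2 * t₂ * bw + w ⬝ᵥ A *ᵥ w) * (u ⬝ᵥ A *ᵥ u) = 0 := by
        linear_combination (t₂ * (u ⬝ᵥ A *ᵥ u) + (-bw - d) + 2 * bw) * hT₂ + hd'
      exact (mul_eq_zero.mp hmul).resolve_right hQune
    by_cases hc1 : x₀ ⬝ᵥ A *ᵥ (w + t₁ • u) ≠ 0
    · exact ⟨w + t₁ • u, hroot _ hr₁, hc1⟩
    by_cases hc2 : x₀ ⬝ᵥ A *ᵥ (w + t₂ • u) ≠ 0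
    · exact ⟨w + t₂ • u, hroot _ hr₂, hc2⟩
    exfalso
    push_neg at hc1 hc2
    have hm1 : (w + t₁ • u) ∈ {x : Fin 3 → ℝ | l ⬝ᵥ x = 0 ∧ x ⬝ᵥ A *ᵥ x = 0} := by
      refine ⟨?_, hroot _ hr₁⟩
      have := hcl (w + t₁ • u)
      rw [hc1] at this
      exact ((mul_eq_zero.mp this.symm).resolve_left hclne)
    have hm2 : (w + t₂ • u) ∈ {x : Fin 3 → ℝ | l ⬝ᵥ x = 0 ∧ x ⬝ᵥ A *ᵥ x = 0} := by
      refine ⟨?_, hroot _ hr₂⟩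
      have := hcl (w + t₂ • u)
      rw [hc2] at this
      exact ((mul_eq_zero.mp this.symm).resolve_left hclne)
    rw [hset] at hm1 hm2
    obtain ⟨s₁, hs₁⟩ := hm1
    obtain ⟨s₂, hs₂⟩ := hm2
    have hdiff : (t₁ - t₂) • u = (s₁ - s₂) • x₀ := by
      have h : (w + t₁ • u) - (w + t₂ • u) = s₁ • x₀ - s₂ • x₀ := by rw [hs₁, hs₂]
      funext i
      have hi := congrFun h i
      simp only [Pi.sub_apply, Pi.add_apply, Pi.smul_apply, smul_eq_mul] at hi ⊢
      linarith
    have ht12 : t₁ - t₂ ≠ 0 := by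
      have : t₁ - t₂ = 2 * d / (u ⬝ᵥ A *ᵥ u) := by
        rw [ht₁, ht₂]; field_simp; ring
      rw [this]
      positivity
    have hQu0 : (t₁ - t₂) ^ 2 * (u ⬝ᵥ A *ᵥ u) = 0 := by
      rw [← bsmul2, hdiff, bsmul2, hQx0, mul_zero]
    rcases mul_eq_zero.mp hQu0 with h | h
    · exact ht12 (pow_eq_zero_iff (by norm_num) |>.mp h)
    · exact hQune h
  -- construct e₂
  set e₂ : Fin 3 → ℝ := cr (A *ᵥ x₀) (A *ᵥ e₃) with he₂def
  have hBx0e2 : x₀ ⬝ᵥ A *ᵥ e₂ = 0 := by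
    rw [he₂def, bflip hA]
    exact dot_cr_left _ _
  have hBe3e2 : e₃ ⬝ᵥ A *ᵥ e₂ = 0 := by
    rw [he₂def, bflip hA]
    exact dot_cr_right _ _
  have he₂ne : e₂ ≠ 0 := by
    intro h0
    obtain ⟨j', hj'⟩ : ∃ j', (A *ᵥ x₀) j' ≠ 0 := by
      by_contra hc
      push_neg at hc
      apply hp
      have hz0 : A *ᵥ x₀ = 0 := funext hc
      rw [bflip hA, hz0, zero_dotProduct]
    set s : ℝ := (A *ᵥ e₃) j' / (A *ᵥ x₀) j' with hsdef
    have hAv : A *ᵥ (e₃ - s • x₀) = 0 := by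
      funext k
      have hk := cr_eq_zero _ _ (he₂def ▸ h0) j' k
      have hexp : (A *ᵥ (e₃ - s • x₀)) k = (A *ᵥ e₃) k - s * ((A *ᵥ x₀) k) := by
        simp [Matrix.mulVec, dotProduct, Fin.sum_univ_three, Pi.sub_apply, Pi.smul_apply]
        ring
      have hs' : s * (A *ᵥ x₀) j' = (A *ᵥ e₃) j' := by
        rw [hsdef]; exact div_mul_cancel₀ _ hj'
      rw [hexp]
      have hmul : ((A *ᵥ e₃) k - s * (A *ᵥ x₀) k) * ((A *ᵥ x₀) j') = 0 := by
        linear_combination hk - (A *ᵥ x₀) k * hs'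
      have := (mul_eq_zero.mp hmul).resolve_right hj'
      simpa using this
    have hsub : e₃ - s • x₀ = 0 := by
      by_contra hne
      exact hdet ((Matrix.exists_mulVec_eq_zero_iff).mp ⟨_, hne, hAv⟩)
    have he3 : e₃ = s • x₀ := by rwa [sub_eq_zero] at hsub
    apply hp
    rw [he3, bsmul, hQx0, mul_zero]
  have hle2 : l ⬝ᵥ e₂ = 0 := by
    have h := hcl e₂
    rw [hBx0e2] at h
    exact ((mul_eq_zero.mp h.symm).resolve_left hclne)
  have hq : e₂ ⬝ᵥ A *ᵥ e₂ ≠ 0 := by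
    intro h0
    have hmem : e₂ ∈ {x : Fin 3 → ℝ | l ⬝ᵥ x = 0 ∧ x ⬝ᵥ A *ᵥ x = 0} := ⟨hle2, h0⟩
    rw [hset] at hmem
    obtain ⟨t', ht'⟩ := hmem
    have h1 : e₃ ⬝ᵥ A *ᵥ e₂ = t' * (x₀ ⬝ᵥ A *ᵥ e₃) := by
      rw [ht', bsmul, bsym hA]
    rw [hBe3e2] at h1
    have ht'0 : t' = 0 := by
      rcases mul_eq_zero.mp h1.symm with h | h
      · exact h
      · exact absurd h hp
    apply he₂ne
    rw [ht', ht'0, zero_smul]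
  -- base matrix and its determinant
  set G₀ : Matrix (Fin 3) (Fin 3) ℝ := Matrix.of fun i k => ![x₀, e₂, e₃] k i with hG₀
  have hGmul : ∀ y : Fin 3 → ℝ, G₀ *ᵥ y = y 0 • x₀ + y 1 • e₂ + y 2 • e₃ := by
    intro y
    funext i
    simp [hG₀, Matrix.mulVec, dotProduct, Fin.sum_univ_three]
    ring
  have hd₀ : G₀.det ≠ 0 := by
    intro h0
    obtain ⟨y, hyne, hy0⟩ := (Matrix.exists_mulVec_eq_zero_iff).mpr h0
    rw [hGmul] at hy0
    have hrow : ∀ z : Fin 3 → ℝ, z ⬝ᵥ A *ᵥ (y 0 • x₀ + y 1 • e₂ + y 2 • e₃) = 0 := by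
      intro z
      rw [hy0]
      simp [Matrix.mulVec, dotProduct, Fin.sum_univ_three]
    have h3 := hrow e₃
    rw [bright3, bsym hA e₃ x₀, hBe3e2, hQe₃] at h3
    have hy0' : y 0 = 0 := by
      have : y 0 * (x₀ ⬝ᵥ A *ᵥ e₃) = 0 := by linarith
      exact (mul_eq_zero.mp this).resolve_right hp
    have h2 := hrow e₂
    rw [bright3, bsym hA e₂ x₀, bsym hA e₂ e₃, hBx0e2, hBe3e2] at h2
    have hy1' : y 1 = 0 := by
      have : y 1 * (e₂ ⬝ᵥ A *ᵥ e₂) = 0 := by linarith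
      exact (mul_eq_zero.mp this).resolve_right hq
    have h1 := hrow x₀
    rw [bright3, hQx0, hBx0e2] at h1
    have hy2' : y 2 = 0 := by
      have : y 2 * (x₀ ⬝ᵥ A *ᵥ e₃) = 0 := by linarith
      exact (mul_eq_zero.mp this).resolve_right hp
    apply hyne
    funext k
    fin_cases k
    · exact hy0'
    · exact hy1'
    · exact hy2'
  -- scalars
  set p : ℝ := x₀ ⬝ᵥ A *ᵥ e₃ with hpdef
  set qq : ℝ := e₂ ⬝ᵥ A *ᵥ e₂ with hqdef
  set d₀ : ℝ := G₀.det with hd₀def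
  have hppos : 0 < p ^ 2 := by positivity
  have hd₀pos : 0 < d₀ ^ 2 := by positivity
  set kk : ℝ := d₀ ^ 2 / (p ^ 2 * |qq|) with hkkdef
  have hkpos : 0 < kk := by
    apply div_pos hd₀pos
    exact mul_pos hppos (abs_pos.mpr hq)
  set lam : ℝ := if 0 < qq then -(kk ^ ((1 : ℝ) / 3)) else kk ^ ((1 : ℝ) / 3) with hlamdef
  have hcbrt : (kk ^ ((1 : ℝ) / 3)) ^ 3 = kk := by
    rw [← Real.rpow_natCast (kk ^ ((1 : ℝ) / 3)) 3, ← Real.rpow_mul hkpos.le]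
    norm_num
  have hcbpos : 0 < kk ^ ((1 : ℝ) / 3) := Real.rpow_pos_of_pos hkpos _
  have hlamne : lam ≠ 0 := by
    rw [hlamdef]
    split_ifs
    · exact neg_ne_zero.mpr (ne_of_gt hcbpos)
    · exact ne_of_gt hcbpos
  have hlam3 : lam ^ 3 * (p ^ 2 * qq) = -d₀ ^ 2 := by
    rw [hlamdef]
    split_ifs with hq0
    · have habs : |qq| = qq := abs_of_pos hq0
      have : (-(kk ^ ((1 : ℝ) / 3))) ^ 3 = -kk := by
        rw [neg_pow]
        norm_num [hcbrt]
      rw [this, hkkdef, habs]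
      field_simp
    · have hqneg : qq < 0 := lt_of_le_of_ne (not_lt.mp hq0) hq
      have habs : |qq| = -qq := abs_of_neg hqneg
      rw [hcbrt, hkkdef, habs]
      field_simp
  set c : ℝ := lam * p / d₀ with hcdef
  set a : ℝ := 1 / (lam * p) with hadef
  have h1 : lam * a * p = 1 := by
    rw [hadef]
    field_simp
  have h2 : lam * c ^ 2 * qq = -1 := by
    have hc' : c * d₀ = lam * p := by
      rw [hcdef]; exact div_mul_cancel₀ _ hd₀
    have h2' : (lam * c ^ 2 * qq + 1) * d₀ ^ 2 = 0 := by
      linear_combination (lam * qq * (c * d₀ + lam * p)) * hc' + hlam3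
    have := (mul_eq_zero.mp h2').resolve_right (pow_ne_zero 2 hd₀)
    linarith
  have hle3 : l ⬝ᵥ e₃ ≠ 0 := by
    intro h0
    apply hp
    rw [hpdef, hcl e₃, h0, mul_zero]
  set mu : ℝ := 1 / (l ⬝ᵥ e₃) with hmudef
  have hmune : mu ≠ 0 := one_div_ne_zero hle3
  set tα : ℝ := mu * (l ⬝ᵥ ξ) with htαdef
  set g : Matrix (Fin 3) (Fin 3) ℝ := Matrix.of fun i k => ![a • x₀, c • e₂, e₃] k i with hgdef
  set v : Fin 3 → ℝ := tα • e₃ - ξ with hvdef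
  have hgmul : ∀ y : Fin 3 → ℝ,
      g *ᵥ y = (y 0 * a) • x₀ + (y 1 * c) • e₂ + y 2 • e₃ := by
    intro y
    funext i
    simp [hgdef, Matrix.mulVec, dotProduct, Fin.sum_univ_three]
    ring
  have hdetg : g.det = 1 := by
    have hfact : g.det = a * c * d₀ := by
      rw [hd₀def, hgdef, hG₀, Matrix.det_fin_three, Matrix.det_fin_three]
      simp [Matrix.of_apply]
      ring
    rw [hfact, hadef, hcdef]
    field_simp
  have hquad : ∀ x : Fin 3 → ℝ,
      lam * ((g *ᵥ x + v + ξ) ⬝ᵥ A *ᵥ (g *ᵥ x + v + ξ)) = 2 * x 0 * (x 2 + tα) - (x 1) ^ 2 := by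
    intro x
    have hveq : g *ᵥ x + v + ξ = (x 0 * a) • x₀ + (x 1 * c) • e₂ + (x 2 + tα) • e₃ := by
      rw [hgmul, hvdef]
      funext i
      simp only [Pi.add_apply, Pi.sub_apply, Pi.smul_apply, smul_eq_mul]
      ring
    rw [hveq, bcomb3 hA, hQx0, hQe₃, hBx0e2, bsym hA e₂ e₃, hBe3e2, ← hpdef, ← hqdef]
    linear_combination (x 1) ^ 2 * h2 + (2 * x 0 * (x 2 + tα)) * h1
  have hlin : ∀ x : Fin 3 → ℝ, mu * (l ⬝ᵥ (g *ᵥ x + v)) = x 2 := by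
    intro x
    rw [hgmul, hvdef]
    have hexp : l ⬝ᵥ ((x 0 * a) • x₀ + (x 1 * c) • e₂ + x 2 • e₃ + (tα • e₃ - ξ))
        = (x 0 * a) * (l ⬝ᵥ x₀) + (x 1 * c) * (l ⬝ᵥ e₂) + (x 2) * (l ⬝ᵥ e₃)
          + tα * (l ⬝ᵥ e₃) - l ⬝ᵥ ξ := by
      simp [dotProduct, Fin.sum_univ_three]
      ring
    rw [hexp, hlx0, hle2, htαdef, hmudef]
    set L3 : ℝ := l ⬝ᵥ e₃ with hL3
    set Lξ : ℝ := l ⬝ᵥ ξ with hLξ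
    have hL3ne : L3 ≠ 0 := hle3
    field_simp
    ring
  refine ⟨⟨lam, mu, tα, g, v, hlamne, hmune, hdetg, hquad, hlin⟩, ?_⟩
  -- density
  have hmem : ∀ s r : ℝ, mu * r + tα ≠ 0 →
      (s, r) ∈ Set.range fun x : Fin 3 → ℝ =>
        (((x + ξ) ⬝ᵥ A *ᵥ (x + ξ), l ⬝ᵥ x) : ℝ × ℝ) := by
    intro s r hsr
    refine ⟨g *ᵥ ![lam * s / (2 * (mu * r + tα)), 0, mu * r] + v, ?_⟩
    have hq1 := hquad ![lam * s / (2 * (mu * r + tα)), 0, mu * r]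
    have hl1 := hlin ![lam * s / (2 * (mu * r + tα)), 0, mu * r]
    simp only [Matrix.cons_val_zero, Matrix.cons_val_one, Matrix.head_cons,
      Matrix.cons_val_two, Matrix.tail_cons] at hq1 hl1
    have hQ : (g *ᵥ ![lam * s / (2 * (mu * r + tα)), 0, mu * r] + v + ξ) ⬝ᵥ A *ᵥ (g *ᵥ ![lam * s / (2 * (mu * r + tα)), 0, mu * r] + v + ξ) = s := by
      have : lam * ((g *ᵥ ![lam * s / (2 * (mu * r + tα)), 0, mu * r] + v + ξ) ⬝ᵥ A *ᵥ (g *ᵥ ![lam * s / (2 * (mu * r + tα)), 0, mu * r] + v + ξ)) = lam * s := by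
        rw [hq1]
        have hden : (mu * r + tα) ≠ 0 := hsr
        field_simp
        ring
      exact mul_left_cancel₀ hlamne this
    have hL : l ⬝ᵥ (g *ᵥ ![lam * s / (2 * (mu * r + tα)), 0, mu * r] + v) = r := by
      have := hl1
      exact mul_left_cancel₀ hmune this
    simp only [Prod.mk.injEq]
    exact ⟨hQ, hL⟩
  intro pt
  rw [mem_closure_iff_seq_limit]
  set β : ℝ := if mu * pt.2 + tα = 0 then 1 else 0 with hβ
  refine ⟨fun n => (pt.1, pt.2 + β * (1 / ((n : ℝ) + 1))), ?_, ?_⟩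
  · intro n
    apply hmem
    rw [hβ]
    split_ifs with hc
    · have hn : ((n : ℝ) + 1) ≠ 0 := by positivity
      have heq : mu * (pt.2 + 1 * (1 / ((n : ℝ) + 1))) + tα = mu * (1 / ((n : ℝ) + 1)) := by
        linear_combination hc
      rw [heq]
      exact mul_ne_zero hmune (one_div_ne_zero hn)
    · intro hcon
      apply hc
      linear_combination hcon
  · have h2nd : Filter.Tendsto (fun n : ℕ => pt.2 + β * (1 / ((n : ℝ) + 1)))
        Filter.atTop (nhds pt.2) := by
      have := (tendsto_one_div_add_atTop_nhds_zero_nat).const_mul β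
      simpa using tendsto_const_nhds.add this
    exact (tendsto_const_nhds.prodMk_nhds h2nd)
end
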